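/- arXiv:math/0703803 — 7 statements merged into one kernel-verified Lean document; each statement's English description precedes it below -/
import Mathlib

section
/- Let m ≥ 1 and let Q be an m×m signed permutation matrix. Then TR(Q) and AD(Q) are again m×m signed permutation matrices and s(AD(Q)) = s(Q) and s(TR(Q)) = s(Q). -/
open Matrix
open scoped Classical

noncomputable section

def IsSignedPerm {m : ℕ} (Q : Matrix (Fin m) (Fin m) ℝ) : Prop :=
  (∀ i, ∃! j, Q i j ≠ 0) ∧ (∀ j, ∃! i, Q i j ≠ 0) ∧
    ∀ i j, Q i j ≠ 0 → Q i j = 1 ∨ Q i j = -1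

def NE {m : ℕ} (Q : Matrix (Fin m) (Fin m) ℝ) (i j : Fin m) : ℕ :=
  (Finset.univ.filter fun p : Fin m × Fin m => p.1 < i ∧ j < p.2 ∧ Q p.1 p.2 ≠ 0).card

def SW {m : ℕ} (Q : Matrix (Fin m) (Fin m) ℝ) (i j : Fin m) : ℕ := NE Qᵀ j i

def deltaRow {m : ℕ} (Q : Matrix (Fin m) (Fin m) ℝ) (i : Fin m) : ℝ :=
  ∑ j, Q i j * (-1 : ℝ) ^ NE Q i j

def DeltaM {m : ℕ} (Q : Matrix (Fin m) (Fin m) ℝ) : Matrix (Fin m) (Fin m) ℝ :=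
  Matrix.diagonal (deltaRow Q)

def sFun {m : ℕ} (Q : Matrix (Fin m) (Fin m) ℝ) : ℝ := (DeltaM Q).trace

def Jplus (m : ℕ) : Matrix (Fin m) (Fin m) ℝ :=
  Matrix.diagonal fun i => (-1 : ℝ) ^ (i : ℕ)

def TR {m : ℕ} (Q : Matrix (Fin m) (Fin m) ℝ) : Matrix (Fin m) (Fin m) ℝ :=
  Jplus m * Qᵀ * Jplus m

def Amat (m : ℕ) : Matrix (Fin m) (Fin m) ℝ :=
  Matrix.of fun i j => if (i : ℕ) + (j : ℕ) = m - 1 then (-1 : ℝ) ^ (i : ℕ) else 0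

def AD {m : ℕ} (Q : Matrix (Fin m) (Fin m) ℝ) : Matrix (Fin m) (Fin m) ℝ :=
  (Amat m)ᵀ * Q * Amat m

def IsUpperPos {m : ℕ} (R : Matrix (Fin m) (Fin m) ℝ) : Prop :=
  (∀ i j, j < i → R i j = 0) ∧ ∀ i, 0 < R i i

def Wmat {m : ℕ} (γ : ℝ → Fin m → ℝ) (t : ℝ) : Matrix (Fin m) (Fin m) ℝ :=
  Matrix.of fun i j => iteratedDeriv (j : ℕ) γ t i

def Wronskian {m : ℕ} (γ : ℝ → Fin m → ℝ) (t : ℝ) : ℝ := (Wmat γ t).det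

def PosLocConv {m : ℕ} (γ : ℝ → Fin m → ℝ) : Prop :=
  ∀ t ∈ Set.Icc (0 : ℝ) 1, 0 < Wronskian γ t

def IsFrameAt {m : ℕ} (γ : ℝ → Fin m → ℝ) (t : ℝ) (F : Matrix (Fin m) (Fin m) ℝ) : Prop :=
  Fᵀ * F = 1 ∧ F.det = 1 ∧ ∃ R, IsUpperPos R ∧ Wmat γ t = F * R

def IsFrenet {m : ℕ} (γ : ℝ → Fin m → ℝ) (F : ℝ → Matrix (Fin m) (Fin m) ℝ) : Prop :=
  ∀ t ∈ Set.Icc (0 : ℝ) 1, IsFrameAt γ t (F t)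

def e1 {m : ℕ} : Fin m → ℝ := fun i => if (i : ℕ) = 0 then 1 else 0

def frobNorm {m : ℕ} (M : Matrix (Fin m) (Fin m) ℝ) : ℝ :=
  Real.sqrt (∑ i, ∑ j, (M i j) ^ 2)

/-!
The nonzero pattern of a signed permutation matrix `Q` is the graph of a permutation `σ`, and
`δ_i(Q) = Q_{i,σ i} · (-1)^{ne_i}` with `ne_i = #{a < i | σ a > σ i}`. Both `TR` and `AD` move the
entry at `(i, σ i)` to a new position (by transposition, resp. by the central symmetry), multiply
it by the checkerboard sign `(-1)^{i + σ i}`, and turn its north-east count into its south-west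
count `sw_i = #{a > i | σ a < σ i}`. Counting the north-west entries `nw_i` two ways gives
`ne_i + nw_i = i` and `sw_i + nw_i = σ i`, so `(-1)^{sw_i} = (-1)^{i + σ i} (-1)^{ne_i}`: the
checkerboard sign cancels, `Δ` is only permuted, and its trace is unchanged.
-/

open Finset

namespace Equiv.Perm

variable {m : ℕ} (σ : Perm (Fin m)) (i : Fin m)

def numNE : ℕ := #{a | a < i ∧ σ i < σ a}

def numNW : ℕ := #{a | a < i ∧ σ a < σ i}

theorem numNE_add_numNW : σ.numNE i + σ.numNW i = i := by
  have hNE : σ.numNE i = #{a ∈ Iio i | σ i < σ a} := by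
    refine congrArg card (Finset.ext fun a => ?_)
    simp
  have hNW : σ.numNW i = #{a ∈ Iio i | ¬ σ i < σ a} := by
    refine congrArg card (Finset.ext fun a => ?_)
    simp only [mem_filter, mem_univ, mem_Iio, true_and, not_lt, and_congr_right_iff]
    exact fun ha => ⟨le_of_lt, fun h => lt_of_le_of_ne h (σ.injective.ne (ne_of_lt ha))⟩
  rw [hNE, hNW, card_filter_add_card_filter_not, Fin.card_Iio]

theorem numNW_inv : σ⁻¹.numNW (σ i) = σ.numNW i :=
  card_equiv σ.symm fun a => by simp [and_comm]

-- `σ⁻¹.numNE (σ i)` is the south-west count `#{a > i | σ a < σ i}`.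
theorem neg_one_pow_numNE_inv :
    (-1 : ℝ) ^ σ⁻¹.numNE (σ i) = (-1) ^ ((i : ℕ) + σ i) * (-1) ^ σ.numNE i := by
  have h₁ := σ⁻¹.numNE_add_numNW (σ i)
  have h₂ := σ.numNE_add_numNW i
  rw [numNW_inv] at h₁
  rw [← pow_add, neg_one_pow_eq_pow_mod_two, neg_one_pow_eq_pow_mod_two (n := _ + _)]
  congr 1
  omega

theorem numNE_rev_conj :
    (Fin.revPerm * σ * Fin.revPerm).numNE (Fin.rev i) = σ⁻¹.numNE (σ i) :=
  card_equiv (Fin.revPerm.trans σ) fun a => by simp [Fin.lt_rev_iff, and_comm]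

end Equiv.Perm

def HasPermPattern {m : ℕ} (Q : Matrix (Fin m) (Fin m) ℝ) (σ : Equiv.Perm (Fin m)) : Prop :=
  ∀ a b, Q a b ≠ 0 ↔ σ a = b

theorem IsSignedPerm.exists_hasPermPattern {m : ℕ} {Q : Matrix (Fin m) (Fin m) ℝ}
    (hQ : IsSignedPerm Q) : ∃ σ, HasPermPattern Q σ := by
  choose f hf hf_unique using hQ.1
  have hinj : Function.Injective f := fun a b hab =>
    (hQ.2.1 (f a)).unique (hf a) (hab ▸ hf b)
  exact ⟨Equiv.ofBijective f hinj.bijective_of_finite, fun a b =>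
    ⟨fun h => (hf_unique a b h).symm, fun h => h ▸ hf a⟩⟩

section SignedPerm

variable {m : ℕ} {Q M : Matrix (Fin m) (Fin m) ℝ} {σ : Equiv.Perm (Fin m)}

theorem neg_one_pow_mul_eq_one_or {x : ℝ} (hx : x = 1 ∨ x = -1) (n : ℕ) :
    (-1) ^ n * x = 1 ∨ (-1) ^ n * x = -1 := by
  rcases neg_one_pow_eq_or ℝ n with h | h <;> rcases hx with rfl | rfl <;> simp [h]

theorem HasPermPattern.isSignedPerm (hM : HasPermPattern M σ)
    (hv : ∀ a b, M a b ≠ 0 → M a b = 1 ∨ M a b = -1) : IsSignedPerm M :=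
  ⟨fun a => ⟨σ a, (hM a _).2 rfl, fun b hb => ((hM a b).1 hb).symm⟩,
    fun b => ⟨σ⁻¹ b, (hM _ b).2 (by simp), fun a ha => by simp [← (hM a b).1 ha]⟩, hv⟩

theorem HasPermPattern.NE_eq (hQ : HasPermPattern Q σ) (i : Fin m) :
    NE Q i (σ i) = σ.numNE i :=
  card_nbij' Prod.fst (fun a => (a, σ a))
    (fun p hp => by
      simp only [mem_coe, mem_filter, mem_univ, true_and] at hp ⊢
      exact ⟨hp.1, (hQ _ _).1 hp.2.2 ▸ hp.2.1⟩)
    (fun a ha => by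
      simp only [mem_coe, mem_filter, mem_univ, true_and] at ha ⊢
      exact ⟨ha.1, ha.2, (hQ _ _).2 rfl⟩)
    (fun p hp => by
      simp only [mem_coe, mem_filter, mem_univ, true_and] at hp
      exact Prod.ext rfl ((hQ _ _).1 hp.2.2))
    (fun _ _ => rfl)

theorem HasPermPattern.deltaRow_eq (hQ : HasPermPattern Q σ) (i : Fin m) :
    deltaRow Q i = Q i (σ i) * (-1) ^ σ.numNE i := by
  rw [deltaRow, Finset.sum_eq_single (σ i), hQ.NE_eq]
  · intro j _ hj
    rw [not_ne_iff.1 (mt ((hQ i j).1) (Ne.symm hj)), zero_mul]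
  · simp

theorem sFun_eq_of_deltaRow_comp (e : Equiv.Perm (Fin m))
    (h : ∀ i, deltaRow M (e i) = deltaRow Q i) : sFun M = sFun Q := by
  simp only [sFun, DeltaM, trace_diagonal, ← Equiv.sum_comp e (deltaRow M), h]

theorem TR_apply (Q : Matrix (Fin m) (Fin m) ℝ) (i j : Fin m) :
    TR Q i j = (-1) ^ ((i : ℕ) + j) * Q j i := by
  rw [TR, Jplus, mul_diagonal, diagonal_mul, transpose_apply, pow_add]
  ring

theorem Amat_apply (i j : Fin m) : Amat m i j = if i = Fin.rev j then (-1) ^ (i : ℕ) else 0 := by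
  simp only [Amat, of_apply, Fin.ext_iff, Fin.val_rev]
  congr 1
  have := j.isLt
  rw [eq_iff_iff]
  omega

theorem AD_apply (Q : Matrix (Fin m) (Fin m) ℝ) (i j : Fin m) :
    AD Q i j = (-1) ^ ((i : ℕ) + j) * Q (Fin.rev i) (Fin.rev j) := by
  simp only [AD, mul_apply, transpose_apply, Amat_apply, ite_mul, mul_ite, zero_mul, mul_zero,
    sum_ite_eq', mem_univ, if_true]
  have hi := i.isLt
  have hj := j.isLt
  have hsign : (-1 : ℝ) ^ ((Fin.rev i : ℕ) + Fin.rev j) = (-1) ^ ((i : ℕ) + j) := by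
    rw [neg_one_pow_eq_pow_mod_two, neg_one_pow_eq_pow_mod_two (n := (i : ℕ) + j)]
    simp only [Fin.val_rev]
    congr 1
    omega
  rw [← hsign, pow_add]
  ring

theorem hasPermPattern_TR (hQ : HasPermPattern Q σ) : HasPermPattern (TR Q) σ⁻¹ := by
  intro a b
  rw [TR_apply, mul_ne_zero_iff, hQ, Equiv.Perm.inv_eq_iff_eq, eq_comm]
  exact and_iff_right (pow_ne_zero _ (by norm_num))

theorem hasPermPattern_AD (hQ : HasPermPattern Q σ) :
    HasPermPattern (AD Q) (Fin.revPerm * σ * Fin.revPerm) := by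
  intro a b
  rw [AD_apply, mul_ne_zero_iff, hQ]
  simp [Fin.rev_eq_iff]

theorem isSignedPerm_TR (hQ : IsSignedPerm Q) : IsSignedPerm (TR Q) := by
  obtain ⟨σ, hσ⟩ := hQ.exists_hasPermPattern
  refine (hasPermPattern_TR hσ).isSignedPerm fun a b h => ?_
  rw [TR_apply] at h ⊢
  exact neg_one_pow_mul_eq_one_or (hQ.2.2 b a (right_ne_zero_of_mul h)) _

theorem isSignedPerm_AD (hQ : IsSignedPerm Q) : IsSignedPerm (AD Q) := by
  obtain ⟨σ, hσ⟩ := hQ.exists_hasPermPattern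
  refine (hasPermPattern_AD hσ).isSignedPerm fun a b h => ?_
  rw [AD_apply] at h ⊢
  exact neg_one_pow_mul_eq_one_or (hQ.2.2 _ _ (right_ne_zero_of_mul h)) _

theorem deltaRow_TR (hQ : HasPermPattern Q σ) (i : Fin m) :
    deltaRow (TR Q) (σ i) = deltaRow Q i := by
  have hsign : (-1 : ℝ) ^ ((σ i : ℕ) + i) * (-1) ^ ((i : ℕ) + σ i) = 1 := by
    rw [← pow_add]
    exact Even.neg_one_pow ⟨(σ i : ℕ) + i, by omega⟩
  rw [(hasPermPattern_TR hQ).deltaRow_eq, hQ.deltaRow_eq, TR_apply, σ.neg_one_pow_numNE_inv]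
  simp only [Equiv.Perm.coe_inv, Equiv.symm_apply_apply]
  linear_combination Q i (σ i) * (-1 : ℝ) ^ σ.numNE i * hsign

theorem deltaRow_AD (hQ : HasPermPattern Q σ) (i : Fin m) :
    deltaRow (AD Q) (Fin.rev i) = deltaRow Q i := by
  have hsign : (-1 : ℝ) ^ ((Fin.rev i : ℕ) + Fin.rev (σ i)) * (-1) ^ ((i : ℕ) + σ i) = 1 := by
    rw [← pow_add]
    have := i.isLt
    have := (σ i).isLt
    exact Even.neg_one_pow ⟨m - 1, by simp only [Fin.val_rev]; omega⟩
  rw [(hasPermPattern_AD hQ).deltaRow_eq, σ.numNE_rev_conj, σ.neg_one_pow_numNE_inv,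
    hQ.deltaRow_eq, AD_apply]
  simp only [Equiv.Perm.mul_apply, Fin.revPerm_apply, Fin.rev_rev]
  linear_combination Q i (σ i) * (-1 : ℝ) ^ σ.numNE i * hsign

theorem sFun_TR (hQ : IsSignedPerm Q) : sFun (TR Q) = sFun Q :=
  have ⟨σ, hσ⟩ := hQ.exists_hasPermPattern
  sFun_eq_of_deltaRow_comp σ (deltaRow_TR hσ)

theorem sFun_AD (hQ : IsSignedPerm Q) : sFun (AD Q) = sFun Q :=
  have ⟨_, hσ⟩ := hQ.exists_hasPermPattern
  sFun_eq_of_deltaRow_comp Fin.revPerm (deltaRow_AD hσ)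

end SignedPerm

theorem stmt0_general (m : ℕ) (Q : Matrix (Fin m) (Fin m) ℝ) (hQ : IsSignedPerm Q) :
    IsSignedPerm (TR Q) ∧ IsSignedPerm (AD Q) ∧ sFun (AD Q) = sFun Q ∧ sFun (TR Q) = sFun Q :=
  ⟨isSignedPerm_TR hQ, isSignedPerm_AD hQ, sFun_AD hQ, sFun_TR hQ⟩

theorem stmt0 (m : ℕ) (hm : 1 ≤ m) (Q : Matrix (Fin m) (Fin m) ℝ) (hQ : IsSignedPerm Q) :
    IsSignedPerm (TR Q) ∧ IsSignedPerm (AD Q) ∧ sFun (AD Q) = sFun Q ∧ sFun (TR Q) = sFun Q :=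
  stmt0_general m Q hQ
end
end

section
/- Let m ≥ 1 and let D₁, D₂ be m×m diagonal matrices all of whose diagonal entries are 1 or −1, with det D₁ = det D₂ = 1 and trace(D₁) = trace(D₂). Then there exists an m×m signed permutation matrix Q with det Q = 1 such that Δ(Q) = D₁ and Δ(TR(Q)) = D₂. -/
open Matrix
open scoped Classical

noncomputable section

/-! The witness is supported on the graph of a permutation `τ`, with entry `d i * (-1) ^ ne_τ(i)`
in row `i`, where `ne_τ(i)` counts the entries north-east of `(i, τ i)`. Then `Δ = diagonal d` by
construction, and the determinant is `∏ d i` because `sign τ = ∏ (-1) ^ ne_τ(i)`. The map `TR`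
sends this matrix to the one of the same shape for `τ⁻¹` and `d ∘ τ⁻¹`: the new exponent
`ne_{τ⁻¹}(τ i)` agrees mod 2 with `i + τ i + ne_τ(i)`, since `ne_τ(i)` and `ne_{τ⁻¹}(τ i)` are the
complements, in `i` and in `τ i`, of the number of entries north-west of `(i, τ i)`. Equal traces
give `d₁` and `d₂` equally many entries `-1`, so `τ` can be chosen with `d₁ ∘ τ⁻¹ = d₂`. -/

open Finset Equiv

namespace Equiv.Perm

variable {m : ℕ} (σ : Perm (Fin m))

def neCount (i : Fin m) : ℕ := #{i' ∈ Iio i | σ i < σ i'}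

theorem sign_eq_prod_neg_one_pow_neCount : sign σ = ∏ j, (-1) ^ σ.neCount j := by
  rw [sign_eq_prod_prod_Iio]
  refine prod_congr rfl fun j _ => ?_
  rw [prod_ite, prod_const_one, one_mul, prod_const, neCount]
  congr 2
  refine filter_congr fun i hi => ?_
  rw [mem_Iio] at hi
  rw [not_lt, le_iff_lt_or_eq, σ.injective.eq_iff, or_iff_left hi.ne']

theorem neCount_add_card_lt (i : Fin m) : σ.neCount i + #{i' ∈ Iio i | σ i' < σ i} = i := by
  rw [neCount, ← card_union_of_disjoint (disjoint_filter.2 fun _ _ h₁ h₂ => lt_asymm h₁ h₂),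
    ← filter_or, filter_true_of_mem, Fin.card_Iio]
  intro i' hi'
  exact (σ.injective.ne (mem_Iio.1 hi').ne').lt_or_gt

theorem card_filter_Iio_inv_lt (i : Fin m) :
    #{j ∈ Iio (σ i) | σ⁻¹ j < i} = #{i' ∈ Iio i | σ i' < σ i} :=
  card_nbij' (⇑σ⁻¹) σ (by intro j; simp +contextual) (by intro j; simp +contextual)
    (fun j _ => σ.apply_symm_apply j) (fun i _ => σ.symm_apply_apply i)

theorem neg_one_pow_neCount_inv_apply {R : Type*} [Monoid R] [HasDistribNeg R] (i : Fin m) :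
    (-1 : R) ^ σ⁻¹.neCount (σ i) = (-1) ^ ((i : ℕ) + σ i + σ.neCount i) := by
  have h₁ := σ.neCount_add_card_lt i
  have h₂ := σ⁻¹.neCount_add_card_lt (σ i)
  rw [coe_inv, symm_apply_apply, ← coe_inv, σ.card_filter_Iio_inv_lt] at h₂
  rw [show (i : ℕ) + σ i + σ.neCount i =
      σ⁻¹.neCount (σ i) + 2 * (σ.neCount i + #{i' ∈ Iio i | σ i' < σ i}) by omega,
    pow_add, pow_mul, neg_one_sq, one_pow, mul_one]

end Equiv.Perm

theorem exists_perm_forall_iff_of_card_eq {α : Type*} [Fintype α] {p q : α → Prop}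
    [DecidablePred p] [DecidablePred q] (h : #{x | p x} = #{x | q x}) :
    ∃ σ : Perm α, ∀ x, p (σ x) ↔ q x := by
  rw [← Fintype.card_subtype, ← Fintype.card_subtype] at h
  have hc : Fintype.card {x // ¬q x} = Fintype.card {x // ¬p x} := by
    rw [Fintype.card_subtype_compl, Fintype.card_subtype_compl, h]
  refine ⟨subtypeCongr (Fintype.equivOfCardEq h.symm) (Fintype.equivOfCardEq hc), fun x => ?_⟩
  by_cases hx : q x
  · simpa [subtypeCongr, hx] using (Fintype.equivOfCardEq h.symm ⟨x, hx⟩).2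
  · simpa [subtypeCongr, hx] using (Fintype.equivOfCardEq hc ⟨x, hx⟩).2

theorem sum_eq_two_mul_card_sub_card {ι : Type*} [Fintype ι] {d : ι → ℝ}
    (hd : ∀ i, d i = 1 ∨ d i = -1) : ∑ i, d i = 2 * #{i | d i = 1} - Fintype.card ι := by
  have h : ∀ i, d i = 2 * (if d i = 1 then 1 else 0) - 1 := fun i => by
    rcases hd i with h | h <;> norm_num [h]
  rw [sum_congr rfl fun i _ => h i, sum_sub_distrib, ← mul_sum, sum_boole, sum_const, card_univ,
    nsmul_one]

theorem exists_perm_comp_eq_of_sum_eq {ι : Type*} [Fintype ι] {d₁ d₂ : ι → ℝ}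
    (h1 : ∀ i, d₁ i = 1 ∨ d₁ i = -1) (h2 : ∀ i, d₂ i = 1 ∨ d₂ i = -1)
    (h : ∑ i, d₁ i = ∑ i, d₂ i) : ∃ σ : Perm ι, d₁ ∘ σ = d₂ := by
  rw [sum_eq_two_mul_card_sub_card h1, sum_eq_two_mul_card_sub_card h2] at h
  obtain ⟨σ, hσ⟩ := exists_perm_forall_iff_of_card_eq (p := (d₁ · = 1)) (q := (d₂ · = 1))
    (by exact_mod_cast (by linarith : (#{i | d₁ i = 1} : ℝ) = #{i | d₂ i = 1}))
  refine ⟨σ, funext fun i => ?_⟩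
  have := hσ i
  rcases h1 (σ i) with h | h <;> rcases h2 i with h' | h' <;> simp_all

theorem NE_eq_neCount {m : ℕ} {Q : Matrix (Fin m) (Fin m) ℝ} {σ : Perm (Fin m)}
    (hQ : ∀ i j, Q i j ≠ 0 ↔ σ i = j) (i : Fin m) : NE Q i (σ i) = σ.neCount i := by
  refine card_nbij' Prod.fst (fun a => (a, σ a)) ?_ (fun a => by simp +contextual [hQ]) ?_
    fun _ _ => rfl
  all_goals rintro ⟨a, b⟩; simp +contextual [hQ]

theorem deltaRow_eq_of_ne_zero_iff {m : ℕ} {Q : Matrix (Fin m) (Fin m) ℝ} {σ : Perm (Fin m)}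
    (hQ : ∀ i j, Q i j ≠ 0 ↔ σ i = j) (i : Fin m) :
    deltaRow Q i = Q i (σ i) * (-1) ^ σ.neCount i := by
  rw [deltaRow, sum_eq_single (σ i), NE_eq_neCount hQ]
  · intro j _ hj
    rw [not_not.1 (mt (hQ i j).1 (Ne.symm hj)), zero_mul]
  · exact absurd (mem_univ _)

section SignedPermMatrix

variable {m : ℕ} (σ : Perm (Fin m))

def signedPermMatrix (d : Fin m → ℝ) : Matrix (Fin m) (Fin m) ℝ :=
  diagonal (fun i => d i * (-1) ^ σ.neCount i) * σ.permMatrix ℝ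

theorem signedPermMatrix_apply (d : Fin m → ℝ) (i j : Fin m) :
    signedPermMatrix σ d i j = if σ i = j then d i * (-1) ^ σ.neCount i else 0 := by
  simp [signedPermMatrix, diagonal_mul, PEquiv.toMatrix_apply]

theorem signedPermMatrix_ne_zero_iff {d : Fin m → ℝ} (hd : ∀ i, d i ≠ 0) (i j : Fin m) :
    signedPermMatrix σ d i j ≠ 0 ↔ σ i = j := by
  rw [signedPermMatrix_apply]
  split_ifs with h <;> simp [h, hd]

theorem isSignedPerm_signedPermMatrix {d : Fin m → ℝ} (hd : ∀ i, d i = 1 ∨ d i = -1) :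
    IsSignedPerm (signedPermMatrix σ d) := by
  have hd₀ : ∀ i, d i ≠ 0 := fun i => by rcases hd i with h | h <;> norm_num [h]
  simp_rw [IsSignedPerm, signedPermMatrix_ne_zero_iff σ hd₀]
  refine ⟨fun i => existsUnique_eq', fun j => σ.bijective.existsUnique j, ?_⟩
  rintro i _ rfl
  rw [signedPermMatrix_apply, if_pos rfl]
  rcases hd i with h | h <;> rcases neg_one_pow_eq_or ℝ (σ.neCount i) with h' | h' <;>
    norm_num [h, h']

theorem det_signedPermMatrix (d : Fin m → ℝ) : (signedPermMatrix σ d).det = ∏ i, d i := by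
  rw [signedPermMatrix, det_mul, det_diagonal, det_permutation,
    σ.sign_eq_prod_neg_one_pow_neCount]
  push_cast
  rw [← prod_mul_distrib]
  refine prod_congr rfl fun i _ => ?_
  rw [mul_assoc, ← mul_pow, neg_one_mul, neg_neg, one_pow, mul_one]

theorem DeltaM_signedPermMatrix {d : Fin m → ℝ} (hd : ∀ i, d i ≠ 0) :
    DeltaM (signedPermMatrix σ d) = diagonal d := by
  rw [DeltaM]
  congr 1
  funext i
  rw [deltaRow_eq_of_ne_zero_iff (signedPermMatrix_ne_zero_iff σ hd), signedPermMatrix_apply,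
    if_pos rfl, mul_assoc, ← mul_pow, neg_one_mul, neg_neg, one_pow, mul_one]

theorem TR_signedPermMatrix (d : Fin m → ℝ) :
    TR (signedPermMatrix σ d) = signedPermMatrix σ⁻¹ (d ∘ ⇑σ⁻¹) := by
  ext a b
  simp only [TR, Jplus, mul_diagonal, diagonal_mul, transpose_apply, signedPermMatrix_apply]
  by_cases h : σ b = a
  · subst h
    rw [Function.comp_apply, show σ⁻¹ (σ b) = b from σ.symm_apply_apply b, if_pos rfl,
      if_pos rfl, σ.neg_one_pow_neCount_inv_apply, pow_add, pow_add]
    ring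
  · rw [if_neg h, if_neg (by rintro rfl; simp at h)]
    ring

end SignedPermMatrix

theorem stmt3_general (m : ℕ) (d₁ d₂ : Fin m → ℝ)
    (h1 : ∀ i, d₁ i = 1 ∨ d₁ i = -1) (h2 : ∀ i, d₂ i = 1 ∨ d₂ i = -1)
    (hdet1 : (Matrix.diagonal d₁).det = 1)
    (htr : (Matrix.diagonal d₁).trace = (Matrix.diagonal d₂).trace) :
    ∃ Q : Matrix (Fin m) (Fin m) ℝ, IsSignedPerm Q ∧ Q.det = 1 ∧
      DeltaM Q = Matrix.diagonal d₁ ∧ DeltaM (TR Q) = Matrix.diagonal d₂ := by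
  obtain ⟨σ, hσ⟩ := exists_perm_comp_eq_of_sum_eq h1 h2 (by simpa only [trace_diagonal] using htr)
  have hd₁ : ∀ i, d₁ i ≠ 0 := fun i => by rcases h1 i with h | h <;> norm_num [h]
  refine ⟨signedPermMatrix σ⁻¹ d₁, isSignedPerm_signedPermMatrix σ⁻¹ h1, ?_,
    DeltaM_signedPermMatrix σ⁻¹ hd₁, ?_⟩
  · rwa [det_signedPermMatrix, ← det_diagonal]
  · rw [TR_signedPermMatrix, inv_inv, hσ]
    exact DeltaM_signedPermMatrix σ fun i => hσ ▸ hd₁ (σ i)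

theorem stmt3 (m : ℕ) (hm : 1 ≤ m) (d₁ d₂ : Fin m → ℝ)
    (h1 : ∀ i, d₁ i = 1 ∨ d₁ i = -1) (h2 : ∀ i, d₂ i = 1 ∨ d₂ i = -1)
    (hdet1 : (Matrix.diagonal d₁).det = 1) (hdet2 : (Matrix.diagonal d₂).det = 1)
    (htr : (Matrix.diagonal d₁).trace = (Matrix.diagonal d₂).trace) :
    ∃ Q : Matrix (Fin m) (Fin m) ℝ, IsSignedPerm Q ∧ Q.det = 1 ∧
      DeltaM Q = Matrix.diagonal d₁ ∧ DeltaM (TR Q) = Matrix.diagonal d₂ :=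
  stmt3_general m d₁ d₂ h1 h2 hdet1 htr
end
end

section
/- Let m ≥ 1, let P be an m×m permutation matrix (entries 0 and 1, exactly one 1 in each row and column), and let D be an m×m diagonal matrix all of whose diagonal entries are 1 or −1. Then the matrix Q = D·Δ(P)·P is a signed permutation matrix and Δ(Q) = D. -/
open Matrix
open scoped Classical

noncomputable section

def IsPermMatrix {m : ℕ} (P : Matrix (Fin m) (Fin m) ℝ) : Prop :=
  (∀ i j, P i j = 0 ∨ P i j = 1) ∧ (∀ i, ∃! j, P i j ≠ 0) ∧ (∀ j, ∃! i, P i j ≠ 0)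

theorem stmt4 (m : ℕ) (hm : 1 ≤ m) (P : Matrix (Fin m) (Fin m) ℝ) (hP : IsPermMatrix P)
    (d : Fin m → ℝ) (hd : ∀ i, d i = 1 ∨ d i = -1) :
    IsSignedPerm (Matrix.diagonal d * DeltaM P * P) ∧
      DeltaM (Matrix.diagonal d * DeltaM P * P) = Matrix.diagonal d := by
  obtain ⟨h01, hrow, hcol⟩ := hP
  set Q := Matrix.diagonal d * DeltaM P * P with hQdef
  have hQij : ∀ i j, Q i j = d i * deltaRow P i * P i j := by
    intro i j
    have : Matrix.diagonal d * DeltaM P = Matrix.diagonal (fun i => d i * deltaRow P i) := by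
      simp [DeltaM, Matrix.diagonal_mul_diagonal]
    rw [hQdef, this, Matrix.diagonal_mul]
  have hδ : ∀ i, deltaRow P i = 1 ∨ deltaRow P i = -1 := by
    intro i
    obtain ⟨j, hj, hu⟩ := hrow i
    have hsum : deltaRow P i = P i j * (-1 : ℝ) ^ NE P i j := by
      unfold deltaRow
      refine Finset.sum_eq_single_of_mem j (Finset.mem_univ j) ?_
      intro b _ hb
      have hb0 : P i b = 0 := by
        by_contra h
        exact hb (hu b h)
      simp [hb0]
    have h1 : P i j = 1 := (h01 i j).resolve_left hj
    rw [hsum, h1, one_mul]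
    rcases Nat.even_or_odd (NE P i j) with he | ho
    · left; exact he.neg_one_pow
    · right; exact ho.neg_one_pow
  have hdne : ∀ i, d i ≠ 0 := by
    intro i; rcases hd i with h | h <;> rw [h] <;> norm_num
  have hδne : ∀ i, deltaRow P i ≠ 0 := by
    intro i; rcases hδ i with h | h <;> rw [h] <;> norm_num
  have hne : ∀ i j, Q i j ≠ 0 ↔ P i j ≠ 0 := by
    intro i j
    rw [hQij]
    constructor
    · intro h hp; exact h (by rw [hp, mul_zero])
    · intro h; exact mul_ne_zero (mul_ne_zero (hdne i) (hδne i)) h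
  have hNE : ∀ i j, NE Q i j = NE P i j := by
    intro i j
    unfold NE
    congr 1
    apply Finset.filter_congr
    intro p _
    simp only [hne]
  have hδQ : ∀ i, deltaRow Q i = d i := by
    intro i
    have hterm : ∀ j, Q i j * (-1 : ℝ) ^ NE Q i j
        = (d i * deltaRow P i) * (P i j * (-1 : ℝ) ^ NE P i j) := by
      intro j; rw [hQij, hNE]; ring
    have : deltaRow Q i = d i * deltaRow P i * deltaRow P i := by
      show (∑ j, Q i j * (-1 : ℝ) ^ NE Q i j) = _
      simp_rw [hterm]
      rw [← Finset.mul_sum]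
      rfl
    rw [this]
    rcases hδ i with h | h <;> rw [h] <;> ring
  constructor
  · refine ⟨?_, ?_, ?_⟩
    · intro i
      obtain ⟨j, hj, hu⟩ := hrow i
      exact ⟨j, (hne i j).mpr hj, fun y hy => hu y ((hne i y).mp hy)⟩
    · intro j
      obtain ⟨i, hi, hu⟩ := hcol j
      exact ⟨i, (hne i j).mpr hi, fun y hy => hu y ((hne y j).mp hy)⟩
    · intro i j h
      have hp : P i j = 1 := (h01 i j).resolve_left ((hne i j).mp h)
      rw [hQij, hp, mul_one]
      rcases hd i with h1 | h1 <;> rcases hδ i with h2 | h2 <;> rw [h1, h2] <;> norm_num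
  · unfold DeltaM
    rw [show deltaRow Q = d from funext hδQ]

end
end

section
/- Let n ≥ 1, let γ : ℝ → ℝ^{n+1} be a smooth curve that is positive locally convex on [0,1], and let M ∈ SO(n+1). Then the time-reversed curve γ^{TR}(t) := J₊·M·γ(1−t) is positive locally convex on [0,1]. Moreover, if |γ(t)| = 1 for all t, then |γ^{TR}(t)| = 1 for all t. -/
/-!
The `k`-th derivative of `t ↦ A γ(1 - t)` is `(-1)^k A γ⁽ᵏ⁾(1 - t)`, so the Wronski matrix of the
reversed curve is `A · W_γ(1 - t) · J₊`. With `A = J₊ M` and `(det J₊)² = 1` its determinant is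
`det M · W_γ(1 - t) > 0`. The norm is preserved because `J₊ M` is orthogonal.
-/

open Matrix
open scoped Classical

noncomputable section

section Jplus

variable (m : ℕ)

lemma Jplus_transpose : (Jplus m)ᵀ = Jplus m := diagonal_transpose _

lemma Jplus_mul_self : Jplus m * Jplus m = 1 := by
  rw [Jplus, diagonal_mul_diagonal, ← diagonal_one]
  congr 1
  funext i
  rw [← pow_add, ← two_mul, pow_mul, neg_one_sq, one_pow]

lemma det_Jplus_mul_self : (Jplus m).det * (Jplus m).det = 1 := by
  rw [← det_mul, Jplus_mul_self, det_one]

lemma Jplus_mul_transpose_mul_Jplus_mul {M : Matrix (Fin m) (Fin m) ℝ} (hM : Mᵀ * M = 1) :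
    (Jplus m * M)ᵀ * (Jplus m * M) = 1 := by
  rw [transpose_mul, Jplus_transpose, Matrix.mul_assoc, ← Matrix.mul_assoc (Jplus m),
    Jplus_mul_self, Matrix.one_mul, hM]

end Jplus

lemma sum_sq_mulVec_of_transpose_mul_self {m : ℕ} {A : Matrix (Fin m) (Fin m) ℝ}
    (hA : Aᵀ * A = 1) (v : Fin m → ℝ) : ∑ i, (A *ᵥ v) i ^ 2 = ∑ i, v i ^ 2 := by
  have h : A *ᵥ v ⬝ᵥ A *ᵥ v = v ⬝ᵥ v := by
    rw [dotProduct_mulVec, ← mulVec_transpose, mulVec_mulVec, hA, one_mulVec]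
  simpa only [dotProduct, sq] using h

lemma iteratedDeriv_mulVec {m k : ℕ} (A : Matrix (Fin m) (Fin m) ℝ) {f : ℝ → Fin m → ℝ}
    {t : ℝ} (hf : ContDiffAt ℝ k f t) :
    iteratedDeriv k (fun s => A *ᵥ f s) t = A *ᵥ iteratedDeriv k f t := by
  let L : (Fin m → ℝ) →L[ℝ] (Fin m → ℝ) := (mulVecLin A).toContinuousLinearMap
  change iteratedDeriv k (L ∘ f) t = L (iteratedDeriv k f t)
  rw [iteratedDeriv_eq_iteratedFDeriv, L.iteratedFDeriv_comp_left hf le_rfl,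
    iteratedDeriv_eq_iteratedFDeriv]
  rfl

lemma iteratedDeriv_mulVec_comp_one_sub {m k : ℕ} (A : Matrix (Fin m) (Fin m) ℝ)
    {γ : ℝ → Fin m → ℝ} (hγ : ContDiff ℝ k γ) (t : ℝ) :
    iteratedDeriv k (fun s => A *ᵥ γ (1 - s)) t =
      (-1 : ℝ) ^ k • A *ᵥ iteratedDeriv k γ (1 - t) := by
  simp_rw [sub_eq_add_neg]
  rw [iteratedDeriv_comp_neg k (fun x => A *ᵥ γ (1 + x)) t,
    congrFun (iteratedDeriv_comp_const_add k (fun y => A *ᵥ γ y) 1) (-t),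
    iteratedDeriv_mulVec A hγ.contDiffAt]

lemma Wmat_mulVec_comp_one_sub {m : ℕ} (A : Matrix (Fin m) (Fin m) ℝ) {γ : ℝ → Fin m → ℝ}
    (hγ : ContDiff ℝ (⊤ : ℕ∞) γ) (t : ℝ) :
    Wmat (fun s => A *ᵥ γ (1 - s)) t = A * Wmat γ (1 - t) * Jplus m := by
  ext i j
  rw [Jplus, mul_diagonal, Wmat, of_apply,
    iteratedDeriv_mulVec_comp_one_sub A (hγ.of_le (by exact_mod_cast le_top)) t]
  simp only [Pi.smul_apply, smul_eq_mul, mulVec, dotProduct, mul_apply, Wmat, of_apply]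
  rw [mul_comm]

lemma Wronskian_Jplus_mul_mulVec_comp_one_sub {m : ℕ} (M : Matrix (Fin m) (Fin m) ℝ)
    {γ : ℝ → Fin m → ℝ} (hγ : ContDiff ℝ (⊤ : ℕ∞) γ) (t : ℝ) :
    Wronskian (fun s => (Jplus m * M) *ᵥ γ (1 - s)) t = M.det * Wronskian γ (1 - t) := by
  rw [Wronskian, Wronskian, Wmat_mulVec_comp_one_sub _ hγ, det_mul, det_mul, det_mul]
  linear_combination (M.det * (Wmat γ (1 - t)).det) * det_Jplus_mul_self m

lemma PosLocConv.Jplus_mul_mulVec_comp_one_sub {m : ℕ} {γ : ℝ → Fin m → ℝ}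
    (hγ : ContDiff ℝ (⊤ : ℕ∞) γ) (hconv : PosLocConv γ) {M : Matrix (Fin m) (Fin m) ℝ}
    (hM : 0 < M.det) : PosLocConv (fun t => (Jplus m * M) *ᵥ γ (1 - t)) := by
  intro t ⟨ht₀, ht₁⟩
  rw [Wronskian_Jplus_mul_mulVec_comp_one_sub M hγ]
  exact mul_pos hM (hconv (1 - t) ⟨by linarith, by linarith⟩)

theorem stmt13_general (n : ℕ) (γ : ℝ → Fin (n+1) → ℝ) (hγ : ContDiff ℝ (⊤ : ℕ∞) γ)
    (hconv : PosLocConv γ) (M : Matrix (Fin (n+1)) (Fin (n+1)) ℝ)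
    (hM : Mᵀ * M = 1) (hMdet : M.det = 1) :
    PosLocConv (fun t => (Jplus (n+1) * M).mulVec (γ (1 - t))) ∧
      ((∀ t : ℝ, ∑ i, (γ t i) ^ 2 = 1) →
        ∀ t : ℝ, ∑ i, ((Jplus (n+1) * M).mulVec (γ (1 - t)) i) ^ 2 = 1) := by
  refine ⟨hconv.Jplus_mul_mulVec_comp_one_sub hγ (hMdet ▸ one_pos), fun hnorm t => ?_⟩
  rw [sum_sq_mulVec_of_transpose_mul_self (Jplus_mul_transpose_mul_Jplus_mul (n + 1) hM)]
  exact hnorm (1 - t)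

theorem stmt13 (n : ℕ) (hn : 1 ≤ n) (γ : ℝ → Fin (n+1) → ℝ) (hγ : ContDiff ℝ (⊤ : ℕ∞) γ)
    (hconv : PosLocConv γ) (M : Matrix (Fin (n+1)) (Fin (n+1)) ℝ)
    (hM : Mᵀ * M = 1) (hMdet : M.det = 1) :
    PosLocConv (fun t => (Jplus (n+1) * M).mulVec (γ (1 - t))) ∧
      ((∀ t : ℝ, ∑ i, (γ t i) ^ 2 = 1) →
        ∀ t : ℝ, ∑ i, ((Jplus (n+1) * M).mulVec (γ (1 - t)) i) ^ 2 = 1) :=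
  stmt13_general n γ hγ hconv M hM hMdet
end
end

section
/- Let n ≥ 1 and let Γ : ℝ → M_{n+1}(ℝ) be a smooth map with Γ(t) ∈ SO(n+1) for all t ∈ [0,1] and Γ(0) = I. Then the following are equivalent: (a) there exists a smooth curve γ : ℝ → ℝ^{n+1}, positive locally convex on [0,1], with |γ(t)| = 1 for all t ∈ [0,1] and F_γ(t) = Γ(t) for all t ∈ [0,1]; (b) for every t ∈ [0,1] the matrix g(t) := Γ(t)ᵀ·Γ'(t) is tridiagonal with positive subdiagonal, i.e. g(t)_{i,j} = 0 whenever |i−j| > 1 and g(t)_{j+1,j} > 0 for all 1 ≤ j ≤ n. Moreover, when these hold, γ(t) = Γ(t)·e₁ on [0,1], and g(t) is skew-symmetric. -/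
open Matrix
open scoped Classical

noncomputable section

def gMat {n : ℕ} (Γ : ℝ → Matrix (Fin n) (Fin n) ℝ) (t : ℝ) : Matrix (Fin n) (Fin n) ℝ :=
  (Γ t)ᵀ * Matrix.of fun i j => deriv (fun u => Γ u i j) t

/-!
Let `r_k = Γᵀ γ⁽ᵏ⁾` be the coordinates of the `k`-th derivative of `γ` in the moving frame `Γ`: these
are the columns of `Γᵀ W_γ`, so `Γ` is the Frenet frame of `γ` exactly when the `r_k` are the columns
of an upper triangular matrix with positive diagonal. Differentiating `ΓᵀΓ = I` shows that `g = ΓᵀΓ'`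
is skew-symmetric, and differentiating `γ⁽ᵏ⁾ = Γ r_k` then gives `r_{k+1} = r_k' + g r_k`. An entry of
`r_k` that vanishes on all of `[0,1]` has vanishing derivative there, so below the diagonal the
recurrence reads `(r_{k+1})_i = (g r_k)_i`, and `r_{k+1,k+1} = g_{k+1,k} r_{k,k}`. Induction on `k`
turns triangularity of the `r_k` into the tridiagonal shape of `g` with positive subdiagonal, and
conversely, starting from `r_0 = e₁`, i.e. `γ = Γ e₁`. For a unit curve, `r_0 = r_{00} e₁` with
`r_{00} > 0` forces `r_0 = e₁`.
-/

open Set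

section Calculus

variable {ι κ : Type*} [Fintype κ]

theorem HasDerivAt.eq_zero_of_eqOn_const {F : Type*} [NormedAddCommGroup F] [NormedSpace ℝ F]
    {f : ℝ → F} {f' c : F} {s : Set ℝ} {t : ℝ} (h : HasDerivAt f f' t)
    (hs : UniqueDiffWithinAt ℝ s t) (ht : t ∈ s) (hf : ∀ u ∈ s, f u = c) : f' = 0 :=
  hs.eq_deriv s h.hasDerivWithinAt ((hasDerivWithinAt_const t s c).congr_of_mem hf ht)

def derivMat (A : ℝ → Matrix ι κ ℝ) (t : ℝ) : Matrix ι κ ℝ :=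
  Matrix.of fun i j => deriv (fun u => A u i j) t

theorem hasDerivAt_mulVec {A : ℝ → Matrix ι κ ℝ} {v : ℝ → κ → ℝ} {v' : κ → ℝ} {t : ℝ}
    (hA : ∀ i j, DifferentiableAt ℝ (fun u => A u i j) t) (hv : HasDerivAt v v' t) :
    HasDerivAt (fun u => A u *ᵥ v u) (derivMat A t *ᵥ v t + A t *ᵥ v') t := by
  refine hasDerivAt_pi.2 fun i => ?_
  simp only [mulVec, dotProduct, Pi.add_apply, ← Finset.sum_add_distrib]
  exact HasDerivAt.fun_sum fun j _ => (hA i j).hasDerivAt.mul (hasDerivAt_pi.1 hv j)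

end Calculus

section LinearAlgebra

variable {ι : Type*} [Fintype ι]

theorem dotProduct_mulVec_self_of_transpose_mul_self [DecidableEq ι] {A : Matrix ι ι ℝ}
    (hA : Aᵀ * A = 1) (v : ι → ℝ) : A *ᵥ v ⬝ᵥ A *ᵥ v = v ⬝ᵥ v := by
  rw [dotProduct_mulVec, ← transpose_transpose A, vecMul_transpose, transpose_transpose,
    mulVec_mulVec, hA, one_mulVec]

theorem mulVec_apply_eq_mul_of_lt_eq_zero [LinearOrder ι] {A : Matrix ι ι ℝ} {v : ι → ℝ}
    {i l : ι} (hv : ∀ j, l < j → v j = 0) (hA : ∀ j, j < l → A i j = 0) :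
    (A *ᵥ v) i = A i l * v l := by
  refine Finset.sum_eq_single l (fun j _ hj => ?_) (by simp)
  rcases lt_or_gt_of_ne hj with h | h
  · exact mul_eq_zero_of_left (hA j h) _
  · exact mul_eq_zero_of_right _ (hv j h)

end LinearAlgebra

variable {m : ℕ} {Γ : ℝ → Matrix (Fin m) (Fin m) ℝ} {γ : ℝ → Fin m → ℝ} {s : Set ℝ} {t : ℝ}

theorem gMat_eq_transpose_mul_derivMat : gMat Γ t = (Γ t)ᵀ * derivMat Γ t := rfl

theorem gMat_transpose_eq_neg (hs : UniqueDiffOn ℝ s)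
    (hΓ : ∀ i j, DifferentiableAt ℝ (fun u => Γ u i j) t)
    (hO : ∀ u ∈ s, (Γ u)ᵀ * Γ u = 1) (ht : t ∈ s) : (gMat Γ t)ᵀ = -gMat Γ t := by
  refine eq_neg_of_add_eq_zero_left (ext_of_mulVec_single fun j => ?_)
  have hΓT : ∀ i j, DifferentiableAt ℝ (fun u => (Γ u)ᵀ i j) t := fun i j => hΓ j i
  have hd := hasDerivAt_mulVec hΓT (hasDerivAt_mulVec hΓ (hasDerivAt_const t (Pi.single j 1)))
  have h0 := hd.eq_zero_of_eqOn_const (hs t ht) ht fun u hu => by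
    rw [mulVec_mulVec, hO u hu, one_mulVec]
  rw [zero_mulVec, ← h0, mulVec_zero, add_zero, mulVec_mulVec, mulVec_mulVec, ← add_mulVec,
    gMat_eq_transpose_mul_derivMat, transpose_mul, transpose_transpose]
  rfl

def frameCoord (Γ : ℝ → Matrix (Fin m) (Fin m) ℝ) (γ : ℝ → Fin m → ℝ) (k : ℕ) (t : ℝ) :
    Fin m → ℝ :=
  (Γ t)ᵀ *ᵥ iteratedDeriv k γ t

theorem hasDerivAt_frameCoord (hs : UniqueDiffOn ℝ s)
    (hΓ : ∀ i j, DifferentiableAt ℝ (fun u => Γ u i j) t) (hγ : ContDiff ℝ (⊤ : ℕ∞) γ)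
    (hO : ∀ u ∈ s, (Γ u)ᵀ * Γ u = 1) (ht : t ∈ s) (k : ℕ) :
    HasDerivAt (frameCoord Γ γ k)
      (frameCoord Γ γ (k + 1) t - gMat Γ t *ᵥ frameCoord Γ γ k t) t := by
  have hv : HasDerivAt (iteratedDeriv k γ) (iteratedDeriv (k + 1) γ t) t := by
    rw [iteratedDeriv_succ]
    exact (hγ.differentiable_iteratedDeriv k (by exact_mod_cast WithTop.coe_lt_top _) t).hasDerivAt
  have hγk : iteratedDeriv k γ t = Γ t *ᵥ frameCoord Γ γ k t := by
    rw [frameCoord, mulVec_mulVec, mul_eq_one_comm.mp (hO t ht), one_mulVec]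
  refine (hasDerivAt_mulVec (A := fun u => (Γ u)ᵀ) (fun i j => hΓ j i) hv).congr_deriv ?_
  have hg : derivMat (fun u => (Γ u)ᵀ) t * Γ t = -gMat Γ t := by
    rw [← gMat_transpose_eq_neg hs hΓ hO ht, gMat_eq_transpose_mul_derivMat, transpose_mul,
      transpose_transpose]
    rfl
  rw [hγk, mulVec_mulVec, hg, neg_mulVec, frameCoord]
  abel

theorem frameCoord_succ_apply_of_eqOn_zero (hs : UniqueDiffOn ℝ s)
    (hΓ : ∀ i j, DifferentiableAt ℝ (fun u => Γ u i j) t) (hγ : ContDiff ℝ (⊤ : ℕ∞) γ)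
    (hO : ∀ u ∈ s, (Γ u)ᵀ * Γ u = 1) (ht : t ∈ s) {k : ℕ} {i : Fin m}
    (hk : ∀ u ∈ s, frameCoord Γ γ k u i = 0) :
    frameCoord Γ γ (k + 1) t i = (gMat Γ t *ᵥ frameCoord Γ γ k t) i := by
  have h := (hasDerivAt_pi.1 (hasDerivAt_frameCoord hs hΓ hγ hO ht k) i).eq_zero_of_eqOn_const
    (hs t ht) ht hk
  rwa [Pi.sub_apply, sub_eq_zero] at h

/-- `k` is a natural number, not an index, so that inductions on `k` need no bound; for `k ≥ m` the
predicate holds trivially. -/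
def IsUpperPosColumn (v : Fin m → ℝ) (k : ℕ) : Prop :=
  (∀ i : Fin m, k < (i : ℕ) → v i = 0) ∧ ∀ i : Fin m, (i : ℕ) = k → 0 < v i

theorem isFrameAt_iff (hO : (Γ t)ᵀ * Γ t = 1) (hdet : (Γ t).det = 1) :
    IsFrameAt γ t (Γ t) ↔ ∀ k : ℕ, IsUpperPosColumn (frameCoord Γ γ k t) k := by
  have hR : (Γ t)ᵀ * Wmat γ t = of fun i (j : Fin m) => frameCoord Γ γ j t i := by
    ext i j
    simp [frameCoord, mul_apply, mulVec, dotProduct, Wmat]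
  have hW : (∃ R, IsUpperPos R ∧ Wmat γ t = Γ t * R) ↔ IsUpperPos ((Γ t)ᵀ * Wmat γ t) :=
    ⟨fun ⟨R, hR, hW⟩ => by rwa [hW, ← Matrix.mul_assoc, hO, Matrix.one_mul],
      fun h => ⟨_, h, by rw [← Matrix.mul_assoc, mul_eq_one_comm.mp hO, Matrix.one_mul]⟩⟩
  rw [IsFrameAt, hW, hR]
  simp only [hO, hdet, true_and]
  constructor
  · rintro ⟨hzero, hdiag⟩ k
    refine ⟨fun i hi => ?_, fun i hi => ?_⟩
    · exact hzero i ⟨k, by omega⟩ hi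
    · subst hi
      exact hdiag i
  · exact fun h => ⟨fun i j hji => (h j).1 i hji, fun i => (h i).2 i rfl⟩

theorem wronskian_pos_of_isFrameAt {F : Matrix (Fin m) (Fin m) ℝ} (h : IsFrameAt γ t F) :
    0 < Wronskian γ t := by
  obtain ⟨-, hdet, R, ⟨hzero, hdiag⟩, hW⟩ := h
  rw [Wronskian, hW, det_mul, hdet, one_mul, det_of_isUpperTriangular fun i j h => hzero i j h]
  exact Finset.prod_pos fun i _ => hdiag i

def IsTridiagPosSubdiag (A : Matrix (Fin m) (Fin m) ℝ) : Prop :=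
  (∀ i j : Fin m, 1 < ((i : ℤ) - (j : ℤ)).natAbs → A i j = 0) ∧
    ∀ i j : Fin m, (i : ℕ) = (j : ℕ) + 1 → 0 < A i j

theorem isTridiagPosSubdiag_gMat_of_isFrameAt (hs : UniqueDiffOn ℝ s)
    (hΓ : ∀ i j, DifferentiableAt ℝ (fun u => Γ u i j) t) (hγ : ContDiff ℝ (⊤ : ℕ∞) γ)
    (hF : ∀ u ∈ s, IsFrameAt γ u (Γ u)) (ht : t ∈ s) : IsTridiagPosSubdiag (gMat Γ t) := by
  have hO : ∀ u ∈ s, (Γ u)ᵀ * Γ u = 1 := fun u hu => (hF u hu).1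
  have hcol : ∀ u ∈ s, ∀ k, IsUpperPosColumn (frameCoord Γ γ k u) k := fun u hu =>
    (isFrameAt_iff (hF u hu).1 (hF u hu).2.1).1 (hF u hu)
  have hsucc : ∀ (i l : Fin m), (l : ℕ) < i → (∀ j, j < l → gMat Γ t i j = 0) →
      frameCoord Γ γ (l + 1) t i = gMat Γ t i l * frameCoord Γ γ l t l := fun i l hli hg => by
    rw [frameCoord_succ_apply_of_eqOn_zero hs hΓ hγ hO ht fun u hu => (hcol u hu l).1 i hli]
    exact mulVec_apply_eq_mul_of_lt_eq_zero (hcol t ht l).1 hg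
  have hlower : ∀ k (i l : Fin m), (l : ℕ) < k → (l : ℕ) + 1 < i → gMat Γ t i l = 0 := by
    intro k
    induction k with
    | zero => intro i l hl; omega
    | succ k ih =>
      intro i l hlk hli
      rcases Nat.lt_succ_iff_lt_or_eq.1 hlk with hlk | rfl
      · exact ih i l hlk hli
      · have h := hsucc i l (by omega) fun j hj => ih i j hj (by omega)
        rw [(hcol t ht _).1 i hli] at h
        exact (mul_eq_zero.1 h.symm).resolve_right ((hcol t ht l).2 l rfl).ne'
  refine ⟨fun i l hil => ?_, fun i l hil => ?_⟩
  · rcases (by omega : (l : ℕ) + 1 < i ∨ (i : ℕ) + 1 < l) with h | h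
    · exact hlower _ i l (Nat.lt_succ_self _) h
    · have hskew := congrFun (congrFun (gMat_transpose_eq_neg hs hΓ hO ht) l) i
      rw [transpose_apply, neg_apply, hlower _ l i (Nat.lt_succ_self _) h, neg_zero] at hskew
      exact hskew
  · have h := hsucc i l (by omega) fun j hj => hlower _ i j hj (by omega)
    exact pos_of_mul_pos_left (h ▸ (hcol t ht (l + 1)).2 i hil) ((hcol t ht l).2 l rfl).le

theorem isFrameAt_of_isTridiagPosSubdiag (hs : UniqueDiffOn ℝ s)
    (hΓ : ∀ u ∈ s, ∀ i j, DifferentiableAt ℝ (fun v => Γ v i j) u) (hγ : ContDiff ℝ (⊤ : ℕ∞) γ)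
    (hSO : ∀ u ∈ s, (Γ u)ᵀ * Γ u = 1 ∧ (Γ u).det = 1) (hγe : ∀ u ∈ s, γ u = Γ u *ᵥ e1)
    (hg : ∀ u ∈ s, IsTridiagPosSubdiag (gMat Γ u)) (ht : t ∈ s) : IsFrameAt γ t (Γ t) := by
  have hO : ∀ u ∈ s, (Γ u)ᵀ * Γ u = 1 := fun u hu => (hSO u hu).1
  refine (isFrameAt_iff (hSO t ht).1 (hSO t ht).2).2 fun k => ?_
  induction k generalizing t with
  | zero =>
    rw [frameCoord, iteratedDeriv_zero, hγe t ht, mulVec_mulVec, hO t ht, one_mulVec]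
    exact ⟨fun i hi => if_neg (by omega), fun i hi => by simp [e1, hi]⟩
  | succ k ih =>
    have hsucc : ∀ i : Fin m, (hi : k < (i : ℕ)) →
        frameCoord Γ γ (k + 1) t i = gMat Γ t i ⟨k, by omega⟩ * frameCoord Γ γ k t ⟨k, by omega⟩ :=
      fun i hi => by
        rw [frameCoord_succ_apply_of_eqOn_zero hs (hΓ t ht) hγ hO ht fun u hu => (ih hu).1 i hi]
        exact mulVec_apply_eq_mul_of_lt_eq_zero (ih ht).1
          fun j hj => (hg t ht).1 i j (by have : (j : ℕ) < k := hj; omega)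
    refine ⟨fun i hi => ?_, fun i hi => ?_⟩
    · rw [hsucc i (by omega), (hg t ht).1 i _ (by simp; omega), zero_mul]
    · rw [hsucc i (by omega)]
      exact mul_pos ((hg t ht).2 i _ hi) ((ih ht).2 _ rfl)

theorem e1_dotProduct_e1 : (e1 : Fin (m + 1) → ℝ) ⬝ᵥ e1 = 1 := by
  simp [dotProduct, e1]

theorem eq_mulVec_e1_of_isFrameAt {Γ : ℝ → Matrix (Fin (m + 1)) (Fin (m + 1)) ℝ}
    {γ : ℝ → Fin (m + 1) → ℝ} (hF : IsFrameAt γ t (Γ t)) (hγ : ∑ i, γ t i ^ 2 = 1) :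
    γ t = Γ t *ᵥ e1 := by
  obtain ⟨hzero, hpos⟩ := (isFrameAt_iff hF.1 hF.2.1).1 hF 0
  have hγr : γ t = Γ t *ᵥ frameCoord Γ γ 0 t := by
    rw [frameCoord, mulVec_mulVec, mul_eq_one_comm.mp hF.1, one_mulVec, iteratedDeriv_zero]
  have hr : frameCoord Γ γ 0 t = frameCoord Γ γ 0 t 0 • e1 := by
    funext i
    rcases eq_or_ne i 0 with rfl | hi
    · simp [e1]
    · simp [e1, hi, hzero i (Fin.pos_of_ne_zero hi)]
  have hr0 : frameCoord Γ γ 0 t 0 = 1 := by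
    have h := dotProduct_mulVec_self_of_transpose_mul_self hF.1 (frameCoord Γ γ 0 t)
    rw [← hγr, hr, smul_dotProduct, dotProduct_smul, e1_dotProduct_e1, dotProduct] at h
    simp only [hγ, ← sq, smul_eq_mul, mul_one] at h
    nlinarith [hpos 0 rfl]
  rw [hγr, hr, hr0, one_smul]

theorem stmt16_general (n : ℕ) (Γ : ℝ → Matrix (Fin (n+1)) (Fin (n+1)) ℝ)
    (hΓ : ∀ i j : Fin (n+1), ContDiff ℝ (⊤ : ℕ∞) fun t => Γ t i j)
    (hSO : ∀ t ∈ Set.Icc (0:ℝ) 1, (Γ t)ᵀ * Γ t = 1 ∧ (Γ t).det = 1) :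
    ((∃ γ : ℝ → Fin (n+1) → ℝ, ContDiff ℝ (⊤ : ℕ∞) γ ∧ PosLocConv γ ∧
        (∀ t ∈ Set.Icc (0:ℝ) 1, ∑ i, (γ t i) ^ 2 = 1) ∧
        ∀ t ∈ Set.Icc (0:ℝ) 1, IsFrameAt γ t (Γ t)) ↔
      (∀ t ∈ Set.Icc (0:ℝ) 1,
        (∀ i j : Fin (n+1), 1 < ((i : ℤ) - (j : ℤ)).natAbs → gMat Γ t i j = 0) ∧
        ∀ i j : Fin (n+1), (i : ℕ) = (j : ℕ) + 1 → 0 < gMat Γ t i j)) ∧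
    (∀ γ : ℝ → Fin (n+1) → ℝ, ContDiff ℝ (⊤ : ℕ∞) γ → PosLocConv γ →
      (∀ t ∈ Set.Icc (0:ℝ) 1, ∑ i, (γ t i) ^ 2 = 1) →
      (∀ t ∈ Set.Icc (0:ℝ) 1, IsFrameAt γ t (Γ t)) →
      ∀ t ∈ Set.Icc (0:ℝ) 1, γ t = (Γ t).mulVec e1) ∧
    ((∀ t ∈ Set.Icc (0:ℝ) 1,
        (∀ i j : Fin (n+1), 1 < ((i : ℤ) - (j : ℤ)).natAbs → gMat Γ t i j = 0) ∧
        ∀ i j : Fin (n+1), (i : ℕ) = (j : ℕ) + 1 → 0 < gMat Γ t i j) →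
      ∀ t ∈ Set.Icc (0:ℝ) 1, (gMat Γ t)ᵀ = -(gMat Γ t)) := by
  have hs := uniqueDiffOn_Icc_zero_one
  have hΓd : ∀ u i j, DifferentiableAt ℝ (fun v => Γ v i j) u := fun u i j =>
    (hΓ i j).differentiable (by simp) u
  have hO : ∀ t ∈ Icc (0 : ℝ) 1, (Γ t)ᵀ * Γ t = 1 := fun t ht => (hSO t ht).1
  refine ⟨⟨fun ⟨γ, hγ, _, _, hF⟩ t ht => isTridiagPosSubdiag_gMat_of_isFrameAt hs (hΓd t) hγ hF ht,
      fun hg => ?_⟩,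
    fun γ _ _ hγ1 hF t ht => eq_mulVec_e1_of_isFrameAt (hF t ht) (hγ1 t ht),
    fun _ t ht => gMat_transpose_eq_neg hs (hΓd t) hO ht⟩
  have hγ : ContDiff ℝ (⊤ : ℕ∞) fun t => Γ t *ᵥ e1 :=
    contDiff_pi.2 fun i => ContDiff.sum (s := Finset.univ) fun j _ => (hΓ i j).mul contDiff_const
  have hF : ∀ t ∈ Icc (0 : ℝ) 1, IsFrameAt (fun t => Γ t *ᵥ e1) t (Γ t) := fun t ht =>
    isFrameAt_of_isTridiagPosSubdiag hs (fun u _ => hΓd u) hγ hSO (fun _ _ => rfl) hg ht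
  refine ⟨_, hγ, fun t ht => wronskian_pos_of_isFrameAt (hF t ht), fun t ht => ?_, hF⟩
  have h := dotProduct_mulVec_self_of_transpose_mul_self (hO t ht) e1
  rw [e1_dotProduct_e1, dotProduct] at h
  simpa only [sq] using h

theorem stmt16 (n : ℕ) (hn : 1 ≤ n) (Γ : ℝ → Matrix (Fin (n+1)) (Fin (n+1)) ℝ)
    (hΓ : ∀ i j : Fin (n+1), ContDiff ℝ (⊤ : ℕ∞) fun t => Γ t i j)
    (hSO : ∀ t ∈ Set.Icc (0:ℝ) 1, (Γ t)ᵀ * Γ t = 1 ∧ (Γ t).det = 1)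
    (hΓ0 : Γ 0 = 1) :
    ((∃ γ : ℝ → Fin (n+1) → ℝ, ContDiff ℝ (⊤ : ℕ∞) γ ∧ PosLocConv γ ∧
        (∀ t ∈ Set.Icc (0:ℝ) 1, ∑ i, (γ t i) ^ 2 = 1) ∧
        ∀ t ∈ Set.Icc (0:ℝ) 1, IsFrameAt γ t (Γ t)) ↔
      (∀ t ∈ Set.Icc (0:ℝ) 1,
        (∀ i j : Fin (n+1), 1 < ((i : ℤ) - (j : ℤ)).natAbs → gMat Γ t i j = 0) ∧
        ∀ i j : Fin (n+1), (i : ℕ) = (j : ℕ) + 1 → 0 < gMat Γ t i j)) ∧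
    (∀ γ : ℝ → Fin (n+1) → ℝ, ContDiff ℝ (⊤ : ℕ∞) γ → PosLocConv γ →
      (∀ t ∈ Set.Icc (0:ℝ) 1, ∑ i, (γ t i) ^ 2 = 1) →
      (∀ t ∈ Set.Icc (0:ℝ) 1, IsFrameAt γ t (Γ t)) →
      ∀ t ∈ Set.Icc (0:ℝ) 1, γ t = (Γ t).mulVec e1) ∧
    ((∀ t ∈ Set.Icc (0:ℝ) 1,
        (∀ i j : Fin (n+1), 1 < ((i : ℤ) - (j : ℤ)).natAbs → gMat Γ t i j = 0) ∧
        ∀ i j : Fin (n+1), (i : ℕ) = (j : ℕ) + 1 → 0 < gMat Γ t i j) →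
      ∀ t ∈ Set.Icc (0:ℝ) 1, (gMat Γ t)ᵀ = -(gMat Γ t)) :=
  stmt16_general n Γ hΓ hSO
end
end

section
/- Let k ≥ 1 and let a₁,…,a_k be positive pairwise distinct real numbers. (i) For any c₀,…,c_k > 0, the smooth curve γ : ℝ → ℝ^{2k+1}, γ(t) = (c₀, c₁cos(a₁t), c₁sin(a₁t), …, c_k cos(a_k t), c_k sin(a_k t)), satisfies det(γ(t), γ'(t), …, γ^{(2k)}(t)) > 0 for all t ∈ ℝ. (ii) For any c₁,…,c_k > 0, the smooth curve γ : ℝ → ℝ^{2k}, γ(t) = (c₁cos(a₁t), c₁sin(a₁t), …, c_k cos(a_k t), c_k sin(a_k t)), satisfies det(γ(t), γ'(t), …, γ^{(2k−1)}(t)) > 0 for all t ∈ ℝ. In both cases, if in addition the sum of the squares of the coefficients c_i equals 1, then |γ(t)| = 1 for all t. -/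
open Matrix
open scoped Classical

noncomputable section

def gammaOdd (k : ℕ) (a c : ℕ → ℝ) : ℝ → Fin (2*k+1) → ℝ := fun t i =>
  if (i : ℕ) = 0 then c 0
  else if (i : ℕ) % 2 = 1 then c (((i : ℕ) + 1) / 2) * Real.cos (a (((i : ℕ) + 1) / 2) * t)
  else c ((i : ℕ) / 2) * Real.sin (a ((i : ℕ) / 2) * t)

def gammaEven (k : ℕ) (a c : ℕ → ℝ) : ℝ → Fin (2*k) → ℝ := fun t i =>
  if (i : ℕ) % 2 = 0 then c ((i : ℕ) / 2 + 1) * Real.cos (a ((i : ℕ) / 2 + 1) * t)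
  else c (((i : ℕ) + 1) / 2) * Real.sin (a (((i : ℕ) + 1) / 2) * t)

/-!
Group the coordinates in pairs `C l · (cos (A l t + ψ l), sin (A l t + ψ l))`. The `j`-th
derivative of such a pair is `C l · A l ^ j` times the pair with phase advanced by `j π / 2`, so
the Wronskian matrix at `t` is a block rotation matrix (determinant `1`) times the one at `t = 0`.
At `t = 0` an entry vanishes unless the parity of the derivative order matches the row (cosine or
sine), and the two surviving blocks are diagonal matrices times the Vandermonde matrix of the
distinct numbers `-(A l) ^ 2`; so the Wronskian is `∏ C l · ∏ C l A l · V ^ 2 > 0`. In odd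
dimension, expanding along the constant coordinate gives `c₀` times the Wronskian of the derivative
of the remaining curve, which is again a curve of the same form.
-/

open Real

theorem iteratedDeriv_eq_of_hasDerivAt {𝕜 E : Type*} [NontriviallyNormedField 𝕜]
    [NormedAddCommGroup E] [NormedSpace 𝕜 E] {f : ℕ → 𝕜 → E}
    (hf : ∀ n x, HasDerivAt (f n) (f (n + 1) x) x) (n : ℕ) :
    iteratedDeriv n (f 0) = f n := by
  induction n with
  | zero => exact iteratedDeriv_zero
  | succ n ih => exact funext fun x => by rw [iteratedDeriv_succ, ih, (hf n x).deriv]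

section CosCurve

variable {ι : Type*}

def cosCurve (c α φ : ι → ℝ) (t : ℝ) (i : ι) : ℝ := c i * cos (α i * t + φ i)

theorem hasDerivAt_cosCurve [Fintype ι] (c α φ : ι → ℝ) (t : ℝ) :
    HasDerivAt (cosCurve c α φ) (cosCurve (c * α) α (fun i => φ i + π / 2) t) t := by
  refine hasDerivAt_pi.2 fun i => ?_
  have h := (((hasDerivAt_id t).const_mul (α i)).add_const (φ i)).cos.const_mul (c i)
  refine h.congr_deriv ?_
  simp only [cosCurve, Pi.mul_apply, ← add_assoc, cos_add_pi_div_two, id]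
  ring

theorem iteratedDeriv_cosCurve [Fintype ι] (c α φ : ι → ℝ) (n : ℕ) :
    iteratedDeriv n (cosCurve c α φ) =
      cosCurve (c * α ^ n) α (fun i => φ i + n * (π / 2)) := by
  have key := iteratedDeriv_eq_of_hasDerivAt
    (f := fun n => cosCurve (c * α ^ n) α (fun i => φ i + n * (π / 2))) (fun n t => by
      refine (hasDerivAt_cosCurve _ α _ t).congr_deriv (funext fun i => ?_)
      simp only [cosCurve, Pi.mul_apply, Pi.pow_apply]
      push_cast
      ring_nf) n
  simpa using key

theorem wmat_cosCurve {m : ℕ} (c α φ : Fin m → ℝ) (t : ℝ) :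
    Wmat (cosCurve c α φ) t =
      of fun i (j : Fin m) => c i * α i ^ (j : ℕ) * cos (α i * t + φ i + j * (π / 2)) := by
  ext i j
  simp [Wmat, iteratedDeriv_cosCurve, cosCurve, add_assoc]

end CosCurve

section Pairing

variable {k : ℕ}

def pairEquiv (k : ℕ) : Fin k × Fin 2 ≃ Fin (2 * k) :=
  finProdFinEquiv.trans (finCongr (Nat.mul_comm k 2))

@[simp]
theorem pairEquiv_val (q : Fin k × Fin 2) : (pairEquiv k q : ℕ) = q.2 + 2 * q.1 := rfl

def pairCoeff (C : Fin k → ℝ) (i : Fin (2 * k)) : ℝ := C ((pairEquiv k).symm i).1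

theorem pairCoeff_mul (C D : Fin k → ℝ) : pairCoeff (C * D) = pairCoeff C * pairCoeff D := rfl

/-- Coordinate `b + 2 l` gets phase `ψ l - b π / 2`, so that it is a cosine for `b = 0` and a sine
for `b = 1`. -/
def pairPhase (ψ : Fin k → ℝ) (i : Fin (2 * k)) : ℝ :=
  ψ ((pairEquiv k).symm i).1 - (((pairEquiv k).symm i).2 : ℕ) * (π / 2)

def rotationMatrix (θ : ℝ) : Matrix (Fin 2) (Fin 2) ℝ := !![cos θ, -sin θ; sin θ, cos θ]

def blockRotation (θ : Fin k → ℝ) : Matrix (Fin k × Fin 2) (Fin k × Fin 2) ℝ :=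
  reindex (Equiv.prodComm _ _) (Equiv.prodComm _ _) (blockDiagonal fun l => rotationMatrix (θ l))

theorem det_blockRotation (θ : Fin k → ℝ) : (blockRotation θ).det = 1 := by
  rw [blockRotation, det_reindex_self, det_blockDiagonal]
  simp [rotationMatrix, det_fin_two_of, ← sq]

/-- Column `q` holds the derivatives of order `pairEquiv k q`, at angles `θ l`. -/
def pairWronskianMatrix (A C θ : Fin k → ℝ) : Matrix (Fin k × Fin 2) (Fin k × Fin 2) ℝ :=
  of fun x q => C x.1 * A x.1 ^ (pairEquiv k q : ℕ) *
    cos (θ x.1 + (((pairEquiv k q : ℕ) : ℝ) - ((x.2 : ℕ) : ℝ)) * (π / 2))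

theorem pairWronskianMatrix_eq_blockRotation_mul (A C θ : Fin k → ℝ) :
    pairWronskianMatrix A C θ = blockRotation θ * pairWronskianMatrix A C 0 := by
  ext ⟨l, b⟩ q
  rw [mul_apply, Fintype.sum_prod_type, Finset.sum_eq_single l (fun l' _ hl' => ?_) (by simp)]
  · simp only [Fin.sum_univ_two, blockRotation, reindex_apply, submatrix_apply,
      Equiv.prodComm_symm, Equiv.prodComm_apply, Prod.swap_prod_mk, blockDiagonal_apply_eq,
      rotationMatrix, pairWronskianMatrix, of_apply, pairEquiv_val, Pi.zero_apply, zero_add,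
      sub_mul]
    set x : ℝ := (((q.2 : ℕ) : ℝ) + 2 * ((q.1 : ℕ) : ℝ)) * (π / 2)
    fin_cases b <;> simp only [Fin.zero_eta, Fin.mk_one, Fin.val_zero, Fin.val_one, Nat.cast_zero,
      Nat.cast_one, zero_mul, one_mul, sub_zero, ← add_sub_assoc, cos_sub_pi_div_two,
      cons_val_zero, cons_val_one, cos_add, sin_add] <;> ring
  · simp [blockRotation, blockDiagonal_apply_ne _ _ _ (Ne.symm hl')]

theorem pairWronskianMatrix_zero (A C : Fin k → ℝ) :
    pairWronskianMatrix A C 0 = blockDiagonal fun b : Fin 2 =>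
      diagonal (fun l => C l * A l ^ (b : ℕ)) * vandermonde (fun l => -A l ^ 2) := by
  ext ⟨l, b⟩ ⟨p, b'⟩
  simp only [pairWronskianMatrix, of_apply, pairEquiv_val, Pi.zero_apply, zero_add,
    blockDiagonal_apply, diagonal_mul, vandermonde_apply]
  rw [show (((b' : ℕ) + 2 * (p : ℕ) : ℕ) - ((b : ℕ) : ℝ)) * (π / 2)
      = p * π + (((b' : ℕ) : ℝ) - (b : ℕ)) * (π / 2) by push_cast; ring,
    cos_add, cos_nat_mul_pi, sin_nat_mul_pi, zero_mul, sub_zero, neg_pow, pow_add, pow_mul]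
  fin_cases b <;> fin_cases b' <;> simp <;> ring

theorem det_pairWronskianMatrix (A C θ : Fin k → ℝ) :
    (pairWronskianMatrix A C θ).det =
      (∏ l, C l) * (∏ l, C l * A l) * (vandermonde fun l => -A l ^ 2).det ^ 2 := by
  rw [pairWronskianMatrix_eq_blockRotation_mul, det_mul, det_blockRotation, one_mul,
    pairWronskianMatrix_zero, det_blockDiagonal, Fin.prod_univ_two]
  simp only [det_mul, det_diagonal, Fin.val_zero, Fin.val_one, pow_zero, pow_one, mul_one]
  ring

theorem det_pairWronskianMatrix_pos {A C : Fin k → ℝ} (hA : ∀ l, 0 < A l)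
    (hA_inj : Function.Injective A) (hC : ∀ l, 0 < C l) (θ : Fin k → ℝ) :
    0 < (pairWronskianMatrix A C θ).det := by
  have hV : (vandermonde fun l => -A l ^ 2).det ≠ 0 :=
    det_vandermonde_ne_zero_iff.2 fun l l' h =>
      hA_inj ((sq_eq_sq₀ (hA l).le (hA l').le).1 (neg_inj.1 h))
  rw [det_pairWronskianMatrix]
  exact mul_pos (mul_pos (Finset.prod_pos fun l _ => hC l)
    (Finset.prod_pos fun l _ => mul_pos (hC l) (hA l))) (pow_two_pos_of_ne_zero hV)

theorem wronskian_cosCurve_pair (A C ψ : Fin k → ℝ) (t : ℝ) :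
    Wronskian (cosCurve (pairCoeff C) (pairCoeff A) (pairPhase ψ)) t =
      (pairWronskianMatrix A C fun l => A l * t + ψ l).det := by
  rw [Wronskian, ← det_submatrix_equiv_self (pairEquiv k), wmat_cosCurve]
  congr 1
  ext x q
  simp only [submatrix_apply, of_apply, pairWronskianMatrix, pairCoeff, pairPhase,
    Equiv.symm_apply_apply]
  congr 2
  ring

theorem sum_sq_cosCurve_pair (A C ψ : Fin k → ℝ) (t : ℝ) :
    ∑ i, cosCurve (pairCoeff C) (pairCoeff A) (pairPhase ψ) t i ^ 2 = ∑ l, C l ^ 2 := by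
  rw [← (pairEquiv k).sum_comp, Fintype.sum_prod_type]
  refine Finset.sum_congr rfl fun l _ => ?_
  simp only [cosCurve, pairCoeff, pairPhase, Fin.sum_univ_two, Equiv.symm_apply_apply,
    Fin.val_zero, Fin.val_one, Nat.cast_zero, Nat.cast_one, zero_mul, one_mul, sub_zero,
    ← add_sub_assoc, cos_sub_pi_div_two]
  linear_combination C l ^ 2 * cos_sq_add_sin_sq (A l * t + ψ l)

end Pairing

theorem wronskian_cosCurve_cons {m : ℕ} (c₀ : ℝ) (c α φ : Fin m → ℝ) (t : ℝ) :
    Wronskian (cosCurve (Fin.cons c₀ c) (Fin.cons 0 α) (Fin.cons 0 φ)) t =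
      c₀ * Wronskian (cosCurve (c * α) α fun i => φ i + π / 2) t := by
  rw [Wronskian, Wronskian, wmat_cosCurve, wmat_cosCurve, det_succ_row_zero,
    Finset.sum_eq_single 0 (fun j _ hj => by simp [Fin.val_ne_zero_iff.2 hj]) (by simp)]
  simp only [Fin.val_zero, pow_zero, one_mul, of_apply, Fin.cons_zero, zero_mul, add_zero,
    CharP.cast_eq_zero, cos_zero, mul_one, Fin.succAbove_zero]
  congr 2
  ext i j
  simp only [submatrix_apply, of_apply, Fin.cons_succ, Fin.val_succ, Pi.mul_apply]
  push_cast
  ring_nf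

theorem gammaEven_eq_cosCurve (k : ℕ) (a c : ℕ → ℝ) :
    gammaEven k a c = cosCurve (pairCoeff fun l : Fin k => c (l + 1))
      (pairCoeff fun l : Fin k => a (l + 1)) (pairPhase 0) := by
  funext t i
  obtain ⟨⟨l, b⟩, rfl⟩ := (pairEquiv k).surjective i
  simp only [gammaEven, cosCurve, pairCoeff, pairPhase, Equiv.symm_apply_apply, pairEquiv_val,
    Pi.zero_apply, zero_sub]
  fin_cases b
  · simp
  · have hidx : (1 + 2 * (l : ℕ) + 1) / 2 = l + 1 := by omega
    simp [hidx, ← sub_eq_add_neg, cos_sub_pi_div_two]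

theorem gammaOdd_succ (k : ℕ) (a c : ℕ → ℝ) (t : ℝ) (i : Fin (2 * k)) :
    gammaOdd k a c t i.succ = gammaEven k a c t i := by
  simp only [gammaOdd, gammaEven, Fin.val_succ, Nat.add_one_ne_zero, if_false]
  rcases Nat.mod_two_eq_zero_or_one i with h | h
  · have hidx : ((i : ℕ) + 1 + 1) / 2 = i / 2 + 1 := by omega
    simp [h, hidx, Nat.succ_mod_two_eq_one_iff.2 h]
  · simp [h, Nat.succ_mod_two_eq_zero_iff.2 h]

theorem gammaOdd_eq_cosCurve (k : ℕ) (a c : ℕ → ℝ) :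
    gammaOdd k a c = cosCurve (Fin.cons (c 0) (pairCoeff fun l : Fin k => c (l + 1)))
      (Fin.cons 0 (pairCoeff fun l : Fin k => a (l + 1))) (Fin.cons 0 (pairPhase 0)) := by
  funext t i
  refine Fin.cases ?_ (fun i => ?_) i
  · simp [gammaOdd, cosCurve]
  · rw [gammaOdd_succ, gammaEven_eq_cosCurve]
    simp [cosCurve]

section Frequencies

variable {k : ℕ} {a : ℕ → ℝ}

theorem injective_fin_add_one_of_ne
    (hdist : ∀ l l', 1 ≤ l → l ≤ k → 1 ≤ l' → l' ≤ k → l ≠ l' → a l ≠ a l') :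
    Function.Injective fun l : Fin k => a (l + 1) := fun l l' h => by
  by_contra hne
  exact hdist _ _ (by omega) (by omega) (by omega) (by omega)
    (fun h' => hne (Fin.ext (by omega))) h

theorem wronskian_gammaEven_pos (ha : ∀ l, 1 ≤ l → l ≤ k → 0 < a l)
    (hdist : ∀ l l', 1 ≤ l → l ≤ k → 1 ≤ l' → l' ≤ k → l ≠ l' → a l ≠ a l')
    {c : ℕ → ℝ} (hc : ∀ l, 1 ≤ l → l ≤ k → 0 < c l) (t : ℝ) :
    0 < Wronskian (gammaEven k a c) t := by
  rw [gammaEven_eq_cosCurve, wronskian_cosCurve_pair]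
  exact det_pairWronskianMatrix_pos (fun l => ha _ (by omega) (by omega))
    (injective_fin_add_one_of_ne hdist) (fun l => hc _ (by omega) (by omega)) _

theorem wronskian_gammaOdd_pos (ha : ∀ l, 1 ≤ l → l ≤ k → 0 < a l)
    (hdist : ∀ l l', 1 ≤ l → l ≤ k → 1 ≤ l' → l' ≤ k → l ≠ l' → a l ≠ a l')
    {c : ℕ → ℝ} (hc : ∀ l, l ≤ k → 0 < c l) (t : ℝ) :
    0 < Wronskian (gammaOdd k a c) t := by
  have hphase : (fun i => pairPhase (0 : Fin k → ℝ) i + π / 2) = pairPhase fun _ => π / 2 := by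
    funext i
    simp only [pairPhase, Pi.zero_apply]
    ring
  rw [gammaOdd_eq_cosCurve, wronskian_cosCurve_cons, hphase, ← pairCoeff_mul,
    wronskian_cosCurve_pair]
  have ha' : ∀ l : Fin k, 0 < a (l + 1) := fun l => ha _ (by omega) (by omega)
  exact mul_pos (hc 0 k.zero_le) (det_pairWronskianMatrix_pos ha'
    (injective_fin_add_one_of_ne hdist) (fun l => mul_pos (hc _ (by omega)) (ha' l)) _)

theorem sum_sq_gammaEven (c : ℕ → ℝ) (t : ℝ) :
    ∑ i, gammaEven k a c t i ^ 2 = ∑ l ∈ Finset.Icc 1 k, c l ^ 2 := by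
  rw [gammaEven_eq_cosCurve, sum_sq_cosCurve_pair,
    Fin.sum_univ_eq_sum_range (fun l => c (l + 1) ^ 2), Finset.range_eq_Ico,
    Finset.sum_Ico_add' (fun l => c l ^ 2), zero_add, Finset.Ico_add_one_right_eq_Icc]

theorem sum_sq_gammaOdd (c : ℕ → ℝ) (t : ℝ) :
    ∑ i, gammaOdd k a c t i ^ 2 = ∑ l ∈ Finset.range (k + 1), c l ^ 2 := by
  rw [Fin.sum_univ_succ, Finset.sum_range_succ', add_comm]
  simp only [gammaOdd_succ, gammaEven_eq_cosCurve, sum_sq_cosCurve_pair,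
    Fin.sum_univ_eq_sum_range (fun l => c (l + 1) ^ 2)]
  simp [gammaOdd]

end Frequencies

theorem stmt17_general (k : ℕ) (a : ℕ → ℝ)
    (ha : ∀ l, 1 ≤ l → l ≤ k → 0 < a l)
    (hdist : ∀ l l', 1 ≤ l → l ≤ k → 1 ≤ l' → l' ≤ k → l ≠ l' → a l ≠ a l') :
    (∀ c : ℕ → ℝ, (∀ l, l ≤ k → 0 < c l) →
      (∀ t : ℝ, 0 < Wronskian (gammaOdd k a c) t) ∧
      ((∑ l ∈ Finset.range (k+1), (c l) ^ 2 = 1) →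
        ∀ t : ℝ, ∑ i, (gammaOdd k a c t i) ^ 2 = 1)) ∧
    (∀ c : ℕ → ℝ, (∀ l, 1 ≤ l → l ≤ k → 0 < c l) →
      (∀ t : ℝ, 0 < Wronskian (gammaEven k a c) t) ∧
      ((∑ l ∈ Finset.Icc 1 k, (c l) ^ 2 = 1) →
        ∀ t : ℝ, ∑ i, (gammaEven k a c t i) ^ 2 = 1)) :=
  ⟨fun c hc => ⟨wronskian_gammaOdd_pos ha hdist hc, fun h t => (sum_sq_gammaOdd c t).trans h⟩,
    fun c hc => ⟨wronskian_gammaEven_pos ha hdist hc, fun h t => (sum_sq_gammaEven c t).trans h⟩⟩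

theorem stmt17 (k : ℕ) (hk : 1 ≤ k) (a : ℕ → ℝ)
    (ha : ∀ l, 1 ≤ l → l ≤ k → 0 < a l)
    (hdist : ∀ l l', 1 ≤ l → l ≤ k → 1 ≤ l' → l' ≤ k → l ≠ l' → a l ≠ a l') :
    (∀ c : ℕ → ℝ, (∀ l, l ≤ k → 0 < c l) →
      (∀ t : ℝ, 0 < Wronskian (gammaOdd k a c) t) ∧
      ((∑ l ∈ Finset.range (k+1), (c l) ^ 2 = 1) →
        ∀ t : ℝ, ∑ i, (gammaOdd k a c t i) ^ 2 = 1)) ∧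
    (∀ c : ℕ → ℝ, (∀ l, 1 ≤ l → l ≤ k → 0 < c l) →
      (∀ t : ℝ, 0 < Wronskian (gammaEven k a c) t) ∧
      ((∑ l ∈ Finset.Icc 1 k, (c l) ^ 2 = 1) →
        ∀ t : ℝ, ∑ i, (gammaEven k a c t i) ^ 2 = 1)) :=
  stmt17_general k a ha hdist
end
end

section
/- Let m ≥ 1. For every Q ∈ SO(m) there exist upper triangular real m×m matrices U₁, U₂ with strictly positive diagonal entries and a signed permutation matrix Q₀ with det Q₀ = 1 such that Q = U₁·Q₀·U₂. Moreover Q₀ is unique: if U₁·Q₀·U₂ = V₁·Q₀'·V₂ where U₁, U₂, V₁, V₂ are upper triangular with strictly positive diagonal entries and Q₀, Q₀' are signed permutation matrices, then Q₀ = Q₀'. -/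
open Matrix
open scoped Classical

noncomputable section

section BruhatHelpers

variable {m : ℕ}

lemma sum_eq_two' {f : Fin m → ℝ} (a b : Fin m) (hab : a ≠ b)
    (h : ∀ c, c ≠ a → c ≠ b → f c = 0) : ∑ c, f c = f a + f b := by
  rw [← Finset.sum_pair hab]
  refine (Finset.sum_subset (Finset.subset_univ _) ?_).symm
  intro c _ hc
  simp only [Finset.mem_insert, Finset.mem_singleton, not_or] at hc
  exact h c hc.1 hc.2

lemma upperPos_one : IsUpperPos (1 : Matrix (Fin m) (Fin m) ℝ) := by
  constructor
  · intro i j hij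
    exact Matrix.one_apply_ne (ne_of_gt hij)
  · intro i; simp

lemma tri_mul_diag {A B : Matrix (Fin m) (Fin m) ℝ}
    (hA : ∀ i j, j < i → A i j = 0) (hB : ∀ i j, j < i → B i j = 0) (i : Fin m) :
    (A * B) i i = A i i * B i i := by
  rw [Matrix.mul_apply]
  apply Finset.sum_eq_single i
  · intro k _ hk
    rcases lt_or_gt_of_ne hk with h | h
    · rw [hA i k h, zero_mul]
    · rw [hB k i h, mul_zero]
  · intro h; exact absurd (Finset.mem_univ i) h

lemma IsUpperPos.mul {A B : Matrix (Fin m) (Fin m) ℝ} (hA : IsUpperPos A) (hB : IsUpperPos B) :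
    IsUpperPos (A * B) := by
  constructor
  · intro i j hij
    rw [Matrix.mul_apply]
    apply Finset.sum_eq_zero
    intro k _
    rcases lt_or_ge k i with hk | hk
    · rw [hA.1 i k hk, zero_mul]
    · rw [hB.1 k j (lt_of_lt_of_le hij hk), mul_zero]
  · intro i
    rw [tri_mul_diag hA.1 hB.1]
    exact mul_pos (hA.2 i) (hB.2 i)

lemma IsUpperPos.det_pos {R : Matrix (Fin m) (Fin m) ℝ} (h : IsUpperPos R) : 0 < R.det := by
  rw [Matrix.det_of_upperTriangular (fun i j hij => h.1 i j hij)]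
  exact Finset.prod_pos fun i _ => h.2 i

end BruhatHelpers

section Exists
variable {m : ℕ}

lemma bruhat_exists (Q : Matrix (Fin m) (Fin m) ℝ) (hdet : Q.det = 1) :
    ∀ k : ℕ, k ≤ m → ∃ L U N : Matrix (Fin m) (Fin m) ℝ,
      IsUpperPos L ∧ IsUpperPos U ∧ N = L * Q * U ∧
      ∀ j : Fin m, (j : ℕ) < k →
        ∃ i, (N i j = 1 ∨ N i j = -1) ∧ (∀ i', i' ≠ i → N i' j = 0) ∧
          ∀ j', j' ≠ j → N i j' = 0 := by
  intro k
  induction k with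
  | zero =>
    intro _
    exact ⟨1, 1, Q, upperPos_one, upperPos_one, by simp,
      fun j hj => absurd hj (Nat.not_lt_zero _)⟩
  | succ k ih =>
    intro hk1
    obtain ⟨L, U, N, hL, hU, hN, hInv⟩ := ih (Nat.le_of_succ_le hk1)
    have hkm : k < m := hk1
    set jk : Fin m := ⟨k, hkm⟩ with hjkdef
    -- N has positive determinant
    have hdetN : 0 < N.det := by
      rw [hN, Matrix.det_mul, Matrix.det_mul, hdet]
      have h1 := hL.det_pos
      have h2 := hU.det_pos
      nlinarith
    -- column jk is nonzero somewhere
    have hcol : ∃ i, N i jk ≠ 0 := by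
      by_contra hc
      push_neg at hc
      rw [Matrix.det_eq_zero_of_column_eq_zero jk hc] at hdetN
      exact lt_irrefl 0 hdetN
    classical
    set S : Finset (Fin m) := Finset.univ.filter (fun i => N i jk ≠ 0) with hSdef
    have hSne : S.Nonempty := by
      obtain ⟨i, hi⟩ := hcol
      exact ⟨i, by simp [hSdef, hi]⟩
    set i0 : Fin m := S.max' hSne with hi0def
    have hi0 : N i0 jk ≠ 0 := by
      have := S.max'_mem hSne
      simpa [hSdef] using this
    have hmax : ∀ i, i0 < i → N i jk = 0 := by
      intro i hi
      by_contra hne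
      exact absurd (S.le_max' i (by simp [hSdef, hne])) (not_le.mpr hi)
    set c : ℝ := N i0 jk with hcdef
    have hi0' : N i0 jk ≠ 0 := by rw [← hcdef]; exact hi0
    have hcabs : 0 < |c| := abs_pos.mpr hi0
    set s : ℝ := c / |c| with hsdef
    have hs : s = 1 ∨ s = -1 := by
      rcases lt_or_gt_of_ne hi0 with hlt | hgt
      · right; rw [hsdef, abs_of_neg hlt]; field_simp
      · left; rw [hsdef, abs_of_pos hgt]; field_simp
    have hss : s * s = 1 := by
      rcases hs with h | h <;> rw [h] <;> norm_num
    -- old pivot columns have zero in row i0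
    have hF1 : ∀ j : Fin m, (j : ℕ) < k → N i0 j = 0 := by
      intro j hj
      obtain ⟨i, hval, hcolz, hrowz⟩ := hInv j hj
      have hjne : jk ≠ j := by
        intro hc; rw [← hc] at hj; exact lt_irrefl _ hj
      have hine : i0 ≠ i := by
        intro hc
        rw [hc] at hi0'
        exact hi0' (hrowz jk hjne)
      exact hcolz i0 hine
    -- the row transformation
    set L' : Matrix (Fin m) (Fin m) ℝ := Matrix.of fun i i' =>
      if i = i' then (if i = i0 then 1 / |c| else 1)
      else if i' = i0 then -N i jk / c else 0 with hL'def
    have hL'app : ∀ i i', L' i i' =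
        (if i = i' then (if i = i0 then 1 / |c| else 1)
         else if i' = i0 then -N i jk / c else 0) := fun i i' => rfl
    have hL'pos : IsUpperPos L' := by
      constructor
      · intro i j hij
        rw [hL'app, if_neg (ne_of_gt hij)]
        by_cases hji : j = i0
        · rw [if_pos hji, hmax i (hji ▸ hij), neg_zero, zero_div]
        · rw [if_neg hji]
      · intro i
        rw [hL'app, if_pos rfl]
        by_cases hi : i = i0
        · rw [if_pos hi]; positivity
        · rw [if_neg hi]; norm_num
    have hM1 : ∀ i j, (L' * N) i j =
        if i = i0 then N i0 j / |c| else N i j - N i jk / c * N i0 j := by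
      intro i j
      rw [Matrix.mul_apply]
      by_cases hi : i = i0
      · rw [if_pos hi, Finset.sum_eq_single i0]
        · rw [hL'app, if_pos hi, hi, if_pos rfl]; ring
        · intro b _ hb
          have hib : i ≠ b := by rw [hi]; exact fun hc => hb hc.symm
          rw [hL'app, if_neg hib, if_neg hb, zero_mul]
        · intro hmem; exact absurd (Finset.mem_univ _) hmem
      · rw [if_neg hi, sum_eq_two' i i0 hi]
        · rw [hL'app, hL'app, if_pos rfl, if_neg hi, if_neg hi, if_pos rfl]
          ring
        · intro b hb1 hb2
          rw [hL'app, if_neg (Ne.symm hb1), if_neg hb2, zero_mul]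
    have hM1col : ∀ i, (L' * N) i jk = if i = i0 then s else 0 := by
      intro i
      rw [hM1]
      by_cases hi : i = i0
      · rw [if_pos hi, if_pos hi]
      · rw [if_neg hi, if_neg hi, ← hcdef, div_mul_cancel₀ _ hi0, sub_self]
    -- the column transformation
    set U' : Matrix (Fin m) (Fin m) ℝ := Matrix.of fun a b =>
      if a = b then 1 else if a = jk then -s * ((L' * N) i0 b) else 0 with hU'def
    have hU'app : ∀ a b, U' a b =
        (if a = b then 1 else if a = jk then -s * ((L' * N) i0 b) else 0) := fun a b => rfl
    have hU'pos : IsUpperPos U' := by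
      constructor
      · intro a b hba
        rw [hU'app, if_neg (ne_of_gt hba)]
        by_cases ha : a = jk
        · rw [if_pos ha]
          have hbk : (b : ℕ) < k := by
            have : b < jk := ha ▸ hba
            exact this
          rw [hM1, if_pos rfl, hF1 b hbk, zero_div, mul_zero]
        · rw [if_neg ha]
      · intro a
        rw [hU'app, if_pos rfl]; norm_num
    set N' : Matrix (Fin m) (Fin m) ℝ := L' * N * U' with hN'def
    have hN' : ∀ i j, N' i j =
        if j = jk then (if i = i0 then s else 0)
        else if i = i0 then 0 else (L' * N) i j := by
      intro i j
      rw [hN'def, Matrix.mul_apply]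
      by_cases hj : j = jk
      · subst hj
        rw [if_pos rfl, Finset.sum_eq_single jk]
        · rw [hU'app, if_pos rfl, mul_one, hM1col]
        · intro b _ hb
          rw [hU'app, if_neg hb, if_neg hb, mul_zero]
        · intro hmem; exact absurd (Finset.mem_univ _) hmem
      · rw [if_neg hj, sum_eq_two' j jk (fun hc => hj hc)]
        · have e1 : U' j j = 1 := by rw [hU'app, if_pos rfl]
          have e2 : U' jk j = -s * ((L' * N) i0 j) := by
            rw [hU'app, if_neg (fun hc : jk = j => hj hc.symm), if_pos rfl]
          rw [e1, e2, mul_one, hM1col]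
          by_cases hi : i = i0
          · rw [if_pos hi, if_pos hi, hi]
            have e3 : (L' * N) i0 j + s * (-s * (L' * N) i0 j) =
                (1 - s * s) * ((L' * N) i0 j) := by ring
            rw [e3, hss, sub_self, zero_mul]
          · rw [if_neg hi, if_neg hi, zero_mul, add_zero]
        · intro b hb1 hb2
          rw [hU'app, if_neg (fun hc : b = j => hb1 hc), if_neg hb2, mul_zero]
    refine ⟨L' * L, U * U', N', hL'pos.mul hL, hU.mul hU'pos, ?_, ?_⟩
    · rw [hN'def, hN]
      simp only [Matrix.mul_assoc]
    · intro j hj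
      rcases Nat.lt_succ_iff_lt_or_eq.mp hj with hjk | hjk
      · -- old columns
        obtain ⟨i, hval, hcolz, hrowz⟩ := hInv j hjk
        have hjne : j ≠ jk := by
          intro hc; rw [hc] at hjk; exact lt_irrefl _ hjk
        have hine : i ≠ i0 := by
          intro hc
          rw [← hc] at hi0'
          exact hi0' (hrowz jk (Ne.symm hjne))
        have hNijk : N i jk = 0 := hrowz jk (Ne.symm hjne)
        have hNi0j : N i0 j = 0 := hF1 j hjk
        refine ⟨i, ?_, ?_, ?_⟩
        · rw [hN' i j, if_neg hjne, if_neg hine, hM1, if_neg hine, hNijk, zero_div,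
            zero_mul, sub_zero]
          exact hval
        · intro i' hi'
          rw [hN' i' j, if_neg hjne]
          by_cases hi'0 : i' = i0
          · rw [if_pos hi'0]
          · rw [if_neg hi'0, hM1, if_neg hi'0, hcolz i' hi', hNi0j, mul_zero, sub_zero]
        · intro j' hj'
          rw [hN' i j']
          by_cases hj'k : j' = jk
          · rw [if_pos hj'k, if_neg hine]
          · rw [if_neg hj'k, if_neg hine, hM1, if_neg hine, hrowz j' hj', hNijk,
              zero_div, zero_mul, sub_zero]
      · -- new column jk
        have hjeq : j = jk := Fin.ext hjk
        refine ⟨i0, ?_, ?_, ?_⟩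
        · rw [hN' i0 j, if_pos hjeq, if_pos rfl]; exact hs
        · intro i' hi'
          rw [hN' i' j, if_pos hjeq, if_neg hi']
        · intro j' hj'
          have hj'k : j' ≠ jk := by rw [← hjeq]; exact hj'
          rw [hN' i0 j', if_neg hj'k, if_pos rfl]

end Exists



section MoreHelpers
variable {m : ℕ}

lemma IsUpperPos.isUnitDet {R : Matrix (Fin m) (Fin m) ℝ} (h : IsUpperPos R) : IsUnit R.det :=
  isUnit_iff_ne_zero.mpr h.det_pos.ne'

lemma IsUpperPos.inv {R : Matrix (Fin m) (Fin m) ℝ} (h : IsUpperPos R) : IsUpperPos R⁻¹ := by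
  haveI := R.invertibleOfIsUnitDet h.isUnitDet
  have htri : ∀ i j, j < i → R⁻¹ i j = 0 :=
    fun i j hij => Matrix.blockTriangular_inv_of_blockTriangular
      (fun i j hij => h.1 i j hij) hij
  refine ⟨htri, fun i => ?_⟩
  have h1 : (R * R⁻¹) i i = 1 := by
    rw [Matrix.mul_nonsing_inv _ h.isUnitDet, Matrix.one_apply_eq]
  rw [tri_mul_diag h.1 htri] at h1
  nlinarith [h.2 i]

end MoreHelpers

section SP
variable {m : ℕ}

lemma signedPerm_rep {P : Matrix (Fin m) (Fin m) ℝ} (h : IsSignedPerm P) :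
    ∃ σ : Fin m → Fin m, Function.Bijective σ ∧
      (∀ j, P (σ j) j = 1 ∨ P (σ j) j = -1) ∧ ∀ i j, i ≠ σ j → P i j = 0 := by
  have hcol := h.2.1
  choose σ h1 h2 using hcol
  have hz : ∀ i j, i ≠ σ j → P i j = 0 := by
    intro i j hij
    by_contra hne
    exact hij (h2 j i hne)
  have hinj : Function.Injective σ := by
    intro j j' hjj
    obtain ⟨c, _, hcu⟩ := h.1 (σ j)
    have e1 : j = c := hcu j (h1 j)
    have e2 : j' = c := hcu j' (by rw [hjj]; exact h1 j')
    rw [e1, e2]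
  exact ⟨σ, Finite.injective_iff_bijective.mp hinj,
    fun j => h.2.2 _ _ (h1 j), hz⟩

lemma signedPerm_orthog {P : Matrix (Fin m) (Fin m) ℝ} (h : IsSignedPerm P) :
    Pᵀ * P = 1 := by
  obtain ⟨σ, hbij, hval, hzero⟩ := signedPerm_rep h
  ext j j'
  rw [Matrix.mul_apply, Matrix.one_apply]
  by_cases hjj : j = j'
  · subst hjj
    simp only [if_pos rfl]
    rw [Finset.sum_eq_single (σ j)]
    · rcases hval j with hv | hv <;> rw [Matrix.transpose_apply, hv] <;> norm_num
    · intro i _ hi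
      rw [Matrix.transpose_apply, hzero i j hi, zero_mul]
    · intro hmem; exact absurd (Finset.mem_univ _) hmem
  · rw [if_neg hjj]
    apply Finset.sum_eq_zero
    intro i _
    by_cases hi : i = σ j
    · have : i ≠ σ j' := by
        rw [hi]; intro hc; exact hjj (hbij.1 hc)
      rw [hzero i j' this, mul_zero]
    · rw [Matrix.transpose_apply, hzero i j hi, zero_mul]

lemma bij_le_eq {f g : Fin m → Fin m} (hf : Function.Bijective f) (hg : Function.Bijective g)
    (h : ∀ j, f j ≤ g j) : f = g := by
  have hs : ∑ j, ((f j : ℕ)) = ∑ j, ((g j : ℕ)) := by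
    rw [hf.sum_comp (fun i : Fin m => (i : ℕ)), hg.sum_comp (fun i : Fin m => (i : ℕ))]
  funext j
  have := (Finset.sum_eq_sum_iff_of_le (f := fun j : Fin m => ((f j : ℕ)))
      (g := fun j : Fin m => ((g j : ℕ))) (fun i _ => h i)).mp hs j (Finset.mem_univ j)
  exact Fin.ext this

end SP

theorem stmt18 (m : ℕ) (hm : 1 ≤ m) (Q : Matrix (Fin m) (Fin m) ℝ)
    (hQ : Qᵀ * Q = 1) (hdet : Q.det = 1) :
    (∃ U₁ U₂ Q₀ : Matrix (Fin m) (Fin m) ℝ, IsUpperPos U₁ ∧ IsUpperPos U₂ ∧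
        IsSignedPerm Q₀ ∧ Q₀.det = 1 ∧ Q = U₁ * Q₀ * U₂) ∧
    ∀ U₁ U₂ V₁ V₂ Q₀ Q₀' : Matrix (Fin m) (Fin m) ℝ,
        IsUpperPos U₁ → IsUpperPos U₂ → IsUpperPos V₁ → IsUpperPos V₂ →
        IsSignedPerm Q₀ → IsSignedPerm Q₀' → U₁ * Q₀ * U₂ = V₁ * Q₀' * V₂ → Q₀ = Q₀' := by
  constructor
  · -- Existence
    obtain ⟨L, U, N, hL, hU, hN, hInv⟩ := bruhat_exists Q hdet m le_rfl
    have hInv' : ∀ j : Fin m, ∃ i, (N i j = 1 ∨ N i j = -1) ∧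
        (∀ i', i' ≠ i → N i' j = 0) ∧ ∀ j', j' ≠ j → N i j' = 0 :=
      fun j => hInv j j.isLt
    choose τ h1 h2 h3 using hInv'
    have hτne : ∀ j, N (τ j) j ≠ 0 := by
      intro j
      rcases h1 j with h | h <;> rw [h] <;> norm_num
    have hτinj : Function.Injective τ := by
      intro j j' hjj
      by_contra hne
      have hz : N (τ j') j = 0 := h3 j' j hne
      rw [← hjj] at hz
      exact hτne j hz
    have hτsurj : Function.Surjective τ :=
      (Finite.injective_iff_bijective.mp hτinj).2
    have hNsp : IsSignedPerm N := by
      refine ⟨?_, ?_, ?_⟩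
      · intro i
        obtain ⟨j, hj⟩ := hτsurj i
        refine ⟨j, by rw [← hj]; exact hτne j, ?_⟩
        intro j'' hj''
        by_contra hne
        rw [← hj] at hj''
        exact hj'' (h3 j j'' hne)
      · intro j
        refine ⟨τ j, hτne j, ?_⟩
        intro i' hi'
        by_contra hne
        exact hi' (h2 j i' hne)
      · intro i j hij
        have hiτ : i = τ j := by
          by_contra hc
          exact hij (h2 j i hc)
        rw [hiτ]
        exact h1 j
    have hdetNpos : 0 < N.det := by
      rw [hN, Matrix.det_mul, Matrix.det_mul, hdet]
      nlinarith [hL.det_pos, hU.det_pos]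
    have hsq : N.det * N.det = 1 := by
      have horth := congrArg Matrix.det (signedPerm_orthog hNsp)
      rwa [Matrix.det_mul, Matrix.det_transpose, Matrix.det_one] at horth
    have hdetN1 : N.det = 1 := by
      rcases mul_self_eq_one_iff.mp hsq with h | h
      · exact h
      · nlinarith
    refine ⟨L⁻¹, U⁻¹, N, hL.inv, hU.inv, hNsp, hdetN1, ?_⟩
    rw [hN, Matrix.mul_assoc L Q U,
      Matrix.nonsing_inv_mul_cancel_left _ _ hL.isUnitDet,
      Matrix.mul_nonsing_inv_cancel_right _ _ hU.isUnitDet]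
  · -- Uniqueness
    intro U₁ U₂ V₁ V₂ Q₀ Q₀' hU₁ hU₂ hV₁ hV₂ hQ₀ hQ₀' heq
    obtain ⟨σ, hσb, hσv, hσz⟩ := signedPerm_rep hQ₀
    obtain ⟨σ', hσ'b, hσ'v, hσ'z⟩ := signedPerm_rep hQ₀'
    set A := V₁⁻¹ * U₁ with hAdef
    set C := V₂ * U₂⁻¹ with hCdef
    have hA : IsUpperPos A := hV₁.inv.mul hU₁
    have hC : IsUpperPos C := hV₂.mul hU₂.inv
    have e1 : A * Q₀ * U₂ = Q₀' * V₂ := by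
      have e : A * Q₀ * U₂ = V₁⁻¹ * (U₁ * Q₀ * U₂) := by
        rw [hAdef]; simp only [Matrix.mul_assoc]
      rw [e, heq, Matrix.mul_assoc V₁ Q₀' V₂,
        Matrix.nonsing_inv_mul_cancel_left _ _ hV₁.isUnitDet]
    have key : A * Q₀ = Q₀' * C := by
      have e : Q₀' * C = Q₀' * V₂ * U₂⁻¹ := by
        rw [hCdef]; simp only [Matrix.mul_assoc]
      rw [e, ← e1, Matrix.mul_nonsing_inv_cancel_right _ _ hU₂.isUnitDet]
    have key2 : Q₀'ᵀ * (A * Q₀) = C := by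
      rw [key, ← Matrix.mul_assoc, signedPerm_orthog hQ₀', Matrix.one_mul]
    have hAQ : ∀ i j, (A * Q₀) i j = A i (σ j) * Q₀ (σ j) j := by
      intro i j
      rw [Matrix.mul_apply, Finset.sum_eq_single (σ j)]
      · intro l _ hl
        rw [hσz l j hl, mul_zero]
      · intro hmem; exact absurd (Finset.mem_univ _) hmem
    have hCjj : ∀ j, C j j = Q₀' (σ' j) j * (A (σ' j) (σ j) * Q₀ (σ j) j) := by
      intro j
      rw [← key2, Matrix.mul_apply, Finset.sum_eq_single (σ' j)]
      · rw [Matrix.transpose_apply, hAQ]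
      · intro k _ hk
        rw [Matrix.transpose_apply, hσ'z k j hk, zero_mul]
      · intro hmem; exact absurd (Finset.mem_univ _) hmem
    have hle : ∀ j, σ' j ≤ σ j := by
      intro j
      by_contra hlt
      push_neg at hlt
      have hpos := hC.2 j
      rw [hCjj j, hA.1 (σ' j) (σ j) hlt, zero_mul, mul_zero] at hpos
      exact lt_irrefl 0 hpos
    have hσeq : σ' = σ := bij_le_eq hσ'b hσb hle
    have hsign : ∀ j, Q₀' (σ j) j = Q₀ (σ j) j := by
      intro j
      have hpos := hC.2 j
      rw [hCjj j, hσeq] at hpos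
      have hApos := hA.2 (σ j)
      rcases hσ'v j with hv1 | hv1 <;> rcases hσv j with hv2 | hv2 <;>
        rw [hσeq] at hv1 <;> rw [hv1, hv2] at hpos ⊢ <;>
        first
        | rfl
        | nlinarith
    ext i j
    by_cases hi : i = σ j
    · rw [hi, hsign j]
    · rw [hσz i j hi, hσ'z i j (by rw [hσeq]; exact hi)]

end
end
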